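/- arXiv:2109.07595 — 5 statements merged into one kernel-verified Lean document; each statement's English description precedes it below -/
import Mathlib

section
/- Every element of the free abelian monoid ℕⁿ admits a unique decomposition of the form Δ^d · η₁ ⋯ η_p where d ∈ ℕ, each η_i ∈ N_n, η₁ ≠ Δ, η_p ≠ 1 (the identity), and for every i < p and every nonidentity g ∈ ℕⁿ, g ≤ η_{i+1} implies η_i · g ≰ Δ. -/
private lemma sumIndLt (p m : ℕ) :
    ∑ i ∈ Finset.range p, (if i < m then (1:ℕ) else 0) = min m p := by
  induction p with
  | zero => simp
  | succ p ih =>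
    rw [Finset.sum_range_succ, ih]
    by_cases h : p < m <;> simp [h] <;> omega

private lemma lemA (q : ℕ) (s : ℕ → ℕ) (h1 : ∀ i, s i ≤ 1)
    (h2 : ∀ i j, i ≤ j → s j ≤ s i) {i : ℕ} (hi : i < q) :
    s i = 1 ↔ i < ∑ j ∈ Finset.range q, s j := by
  constructor
  · intro hs
    have hle : ∑ j ∈ Finset.range q, (if j < i + 1 then (1:ℕ) else 0) ≤
        ∑ j ∈ Finset.range q, s j := by
      apply Finset.sum_le_sum
      intro j _
      by_cases hj : j < i + 1
      · simpa [hj] using (hs ▸ h2 j i (by omega))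
      · simp [hj]
    rw [sumIndLt] at hle
    omega
  · intro hs
    by_contra hsi
    have hs0 : s i = 0 := by have := h1 i; omega
    have hge : ∑ j ∈ Finset.range q, s j ≤
        ∑ j ∈ Finset.range q, (if j < i then (1:ℕ) else 0) := by
      apply Finset.sum_le_sum
      intro j _
      by_cases hj : j < i
      · simpa [hj] using h1 j
      · have := h2 i j (by omega)
        simp [hj]; omega
    rw [sumIndLt] at hge
    omega

/-- Every element of the free abelian monoid `ℕⁿ` admits a unique decomposition
`Δ^d · η₁ ⋯ η_p` with each `η_i ∈ N_n` (all coordinates 0 or 1), `η₁ ≠ Δ`,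
`η_p ≠ 1`, and such that for every `i < p` and every nonidentity `g' ∈ ℕⁿ`,
`g' ≤ η_{i+1}` implies `η_i · g' ≰ Δ`. -/
theorem freeAbelianMonoid_unique_normal_decomposition (n : ℕ) (hn : 1 ≤ n)
    (g : Fin n → ℕ) :
    ∃! dL : ℕ × List (Fin n → ℕ),
      (∀ k, g k = dL.1 + (dL.2.map (fun η => η k)).sum) ∧
      (∀ η ∈ dL.2, ∀ k, η k ≤ 1) ∧
      (∀ h : dL.2 ≠ [], dL.2.head h ≠ fun _ => 1) ∧
      (∀ h : dL.2 ≠ [], dL.2.getLast h ≠ fun _ => 0) ∧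
      (∀ (i : ℕ) (hi : i + 1 < dL.2.length) (g' : Fin n → ℕ),
        g' ≠ (fun _ => 0) →
        (∀ k, g' k ≤ dL.2.get ⟨i + 1, hi⟩ k) →
        ¬ ∀ k, dL.2.get ⟨i, Nat.lt_of_succ_lt hi⟩ k + g' k ≤ 1) := by
  haveI : Nonempty (Fin n) := ⟨⟨0, hn⟩⟩
  set d : ℕ := Finset.univ.inf' Finset.univ_nonempty g with hd
  set M : ℕ := Finset.univ.sup' Finset.univ_nonempty g with hM
  have hdle : ∀ k, d ≤ g k := fun k => Finset.inf'_le g (Finset.mem_univ k)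
  have hleM : ∀ k, g k ≤ M := fun k => Finset.le_sup' g (Finset.mem_univ k)
  obtain ⟨k0, -, hk0'⟩ := Finset.exists_mem_eq_inf' (Finset.univ_nonempty (α := Fin n)) g
  obtain ⟨k1, -, hk1'⟩ := Finset.exists_mem_eq_sup' (Finset.univ_nonempty (α := Fin n)) g
  have hk0 : d = g k0 := hk0'
  have hk1 : M = g k1 := hk1'
  set p : ℕ := M - d with hp
  set L : List (Fin n → ℕ) :=
    List.ofFn (fun i : Fin p => fun k => if d + (i : ℕ) + 1 ≤ g k then 1 else 0) with hL
  have hLlen : L.length = p := by rw [hL]; simp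
  have hLget : ∀ (i : ℕ) (hi : i < L.length) (k : Fin n),
      L.get ⟨i, hi⟩ k = if d + i + 1 ≤ g k then 1 else 0 := by
    intro i hi k
    clear_value L
    subst hL
    simp [List.getElem_ofFn]
  have cond1 : ∀ k, g k = d + (L.map (fun η => η k)).sum := by
    intro k
    have hdk := hdle k
    have hMk := hleM k
    have e1 : (L.map (fun η => η k)).sum =
        ∑ i ∈ Finset.range p, (if i < g k - d then (1:ℕ) else 0) := by
      rw [hL]
      rw [List.map_ofFn, List.sum_ofFn,
        ← Fin.sum_univ_eq_sum_range (fun i => if i < g k - d then (1:ℕ) else 0) p]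
      apply Finset.sum_congr rfl
      intro i _
      simp only [Function.comp_apply]
      split_ifs <;> omega
    rw [e1, sumIndLt]
    clear e1
    omega
  have cond2 : ∀ η ∈ L, ∀ k, η k ≤ 1 := by
    intro η hη k
    rw [hL] at hη
    obtain ⟨i, rfl⟩ := List.mem_ofFn.1 hη
    simp only
    split_ifs <;> omega
  refine ⟨(d, L), ⟨?_, ?_, ?_, ?_, ?_⟩, ?_⟩
  · exact cond1
  · exact cond2
  · -- head ≠ Δ
    intro h
    have hlen : 0 < L.length := List.length_pos_iff.2 h
    rw [← List.get_mk_zero hlen]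
    intro hcon
    have h2 : (if d + 0 + 1 ≤ g k0 then (1:ℕ) else 0) = 1 := by
      rw [← hLget 0 hlen k0]; exact congrFun hcon k0
    split_ifs at h2 <;> omega
  · -- last ≠ 0
    intro h
    have hlen : 0 < L.length := List.length_pos_iff.2 h
    rw [List.getLast_eq_getElem]
    intro hcon
    have h2 : (if d + (L.length - 1) + 1 ≤ g k1 then (1:ℕ) else 0) = 0 := by
      rw [← hLget (L.length - 1) (by omega) k1]; exact congrFun hcon k1
    have := hdle k1
    rw [hLlen] at h2 hlen
    split_ifs at h2 <;> omega
  · -- chain condition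
    intro i hi g' hg' hle hcon
    have : ∃ k, 1 ≤ g' k := by
      by_contra hc
      push_neg at hc
      exact hg' (funext fun k => by have := hc k; omega)
    obtain ⟨k, hk⟩ := this
    have h2 := hle k
    rw [show ((d, L).2.get ⟨i + 1, hi⟩ : Fin n → ℕ) = L.get ⟨i + 1, hi⟩ from rfl,
      hLget (i+1) hi k] at h2
    have h3 := hcon k
    rw [show ((d, L).2.get ⟨i, Nat.lt_of_succ_lt hi⟩ : Fin n → ℕ) =
        L.get ⟨i, Nat.lt_of_succ_lt hi⟩ from rfl,
      hLget i (Nat.lt_of_succ_lt hi) k] at h3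
    split_ifs at h2 h3 <;> omega
  · -- uniqueness
    rintro ⟨d', L'⟩ ⟨hsum, h01, hhead, hlast, hchain⟩
    set q : ℕ := L'.length with hq
    set S : Fin n → ℕ → ℕ := fun k i => L'.getD i (fun _ => 0) k with hS
    have hSget : ∀ (k : Fin n) (i : ℕ) (h : i < q), S k i = L'.get ⟨i, h⟩ k := by
      intro k i h
      show L'.getD i (fun _ => 0) k = _
      rw [List.getD_eq_getElem _ _ h]
      rfl
    have hS0 : ∀ (k : Fin n) (i : ℕ), ¬ i < q → S k i = 0 := by
      intro k i h
      show L'.getD i (fun _ => 0) k = 0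
      rw [List.getD_eq_default _ _ (by omega)]
    have hS01 : ∀ k i, S k i ≤ 1 := by
      intro k i
      by_cases h : i < q
      · rw [hSget k i h]; exact h01 _ (L'.get_mem ⟨i, h⟩) k
      · rw [hS0 k i h]; omega
    have hSadj : ∀ k i, S k (i+1) ≤ S k i := by
      intro k i
      by_cases h : i + 1 < q
      · rw [hSget k (i+1) h, hSget k i (Nat.lt_of_succ_lt h)]
        by_contra hc
        push_neg at hc
        have h01a := h01 _ (L'.get_mem ⟨i, Nat.lt_of_succ_lt h⟩) k
        have h01b := h01 _ (L'.get_mem ⟨i+1, h⟩) k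
        have ha : L'.get ⟨i, Nat.lt_of_succ_lt h⟩ k = 0 := by omega
        have hb : L'.get ⟨i+1, h⟩ k = 1 := by omega
        refine hchain i h (fun j => if j = k then 1 else 0) ?_ ?_ ?_
        · intro hfun
          have := congrFun hfun k
          simp at this
        · intro j
          by_cases hj : j = k
          · subst hj; simp [hb]
          · simp [hj]
        · intro j
          by_cases hj : j = k
          · subst hj; simp [ha]
          · have := h01 _ (L'.get_mem ⟨i, Nat.lt_of_succ_lt h⟩) j
            simp only [List.get_eq_getElem] at this ⊢
            simp [hj]
            omega
      · rw [hS0 k (i+1) h]; omega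
    have hSanti : ∀ k i j, i ≤ j → S k j ≤ S k i := by
      intro k i j hij
      induction j, hij using Nat.le_induction with
      | base => exact le_refl _
      | succ j hij ih => exact le_trans (hSadj k j) ih
    have hsum' : ∀ k, (L'.map (fun η => η k)).sum = ∑ i ∈ Finset.range q, S k i := by
      intro k
      conv_lhs => rw [← List.ofFn_get L', List.map_ofFn, List.sum_ofFn]
      rw [← Fin.sum_univ_eq_sum_range (S k) q]
      apply Finset.sum_congr rfl
      intro i _
      exact (hSget k i.1 i.isLt).symm
    set m : Fin n → ℕ := fun k => ∑ i ∈ Finset.range q, S k i with hm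
    have hgk : ∀ k, g k = d' + m k := by
      intro k
      have := hsum k
      rw [show ((d', L').1 : ℕ) = d' from rfl,
        show ((d', L').2 : List (Fin n → ℕ)) = L' from rfl] at this
      rw [this, hsum' k]
    have hget : ∀ (i : ℕ) (hi : i < q) (k : Fin n),
        L'.get ⟨i, hi⟩ k = if i < m k then 1 else 0 := by
      intro i hi k
      have hiff := lemA q (S k) (hS01 k) (hSanti k) hi
      rw [hSget k i hi] at hiff
      have h1 := h01 _ (L'.get_mem ⟨i, hi⟩) k
      split_ifs with hc
      · exact hiff.2 hc
      · by_contra h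
        exact hc (hiff.1 (by omega))
    have hmq : ∀ k, m k ≤ q := by
      intro k
      calc m k ≤ ∑ _i ∈ Finset.range q, 1 := Finset.sum_le_sum fun i _ => hS01 k i
      _ = q := by simp
    have hd'le : ∀ k, d' ≤ g k := fun k => by rw [hgk k]; omega
    have hdd' : d = d' := by
      rcases Nat.eq_zero_or_pos q with hq0 | hq0
      · have hall : ∀ k, g k = d' := fun k => by
          have h1 := hgk k
          have h2 : m k = 0 := by
            show (∑ i ∈ Finset.range q, S k i) = 0
            rw [hq0]; simp
          omega
        have := hd'le k0
        have := hall k0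
        omega
      · have hne : L' ≠ [] := by
          intro hc
          rw [hq, hc] at hq0; simp at hq0
        have hh : L'.get ⟨0, by omega⟩ ≠ fun _ => 1 := by
          rw [List.get_mk_zero]; exact hhead hne
        have : ∃ k, L'.get ⟨0, by omega⟩ k ≠ 1 := by
          by_contra hc
          push_neg at hc
          exact hh (funext hc)
        obtain ⟨k, hkne⟩ := this
        rw [hget 0 hq0 k] at hkne
        have hm0 : m k = 0 := by
          split_ifs at hkne with hc <;> omega
        have hgkd : g k = d' := by have := hgk k; omega
        have h1 := hd'le k0
        have h2 := hdle k
        omega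
    have hqp : q = p := by
      rcases Nat.eq_zero_or_pos q with hq0 | hq0
      · have hall : ∀ k, g k = d' := fun k => by
          have h1 := hgk k
          have h2 : m k = 0 := by
            show (∑ i ∈ Finset.range q, S k i) = 0
            rw [hq0]; simp
          omega
        have hMd : M = d' := by rw [hk1, hall k1]
        omega
      · have hne : L' ≠ [] := by
          intro hc
          rw [hq, hc] at hq0; simp at hq0
        have hl : L'.get ⟨L'.length - 1, by omega⟩ ≠ fun _ => 0 := by
          rw [List.get_eq_getElem, ← List.getLast_eq_getElem]; exact hlast hne
        have : ∃ k, L'.get ⟨L'.length - 1, by omega⟩ k ≠ 0 := by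
          by_contra hc
          push_neg at hc
          exact hl (funext hc)
        obtain ⟨k, hkne⟩ := this
        rw [hget (L'.length - 1) (by omega) k] at hkne
        have hmk : q - 1 < m k := by
          split_ifs at hkne with hc
          · rw [hq]; exact hc
          · omega
        have hmkq : m k = q := by have := hmq k; omega
        have hgkq : g k = d' + q := by rw [hgk k, hmkq]
        have h1 : d' + q ≤ M := hgkq ▸ hleM k
        have h2 : M ≤ d' + q := by
          rw [hk1, hgk k1]
          have := hmq k1
          omega
        omega
    rw [Prod.mk.injEq]
    constructor
    · exact hdd'.symm
    · apply List.ext_get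
      · rw [hLlen, ← hq, hqp]
      · intro i h1 h2
        funext k
        rw [hget i (by omega) k, hLget i (by omega) k]
        have hone := hgk k
        rw [← hdd'] at hone
        split_ifs with ha hb
        · rfl
        · omega
        · omega
        · rfl
end

section
/- In the Klein bottle monoid K⁺ = ⟨a, b | bab = a⟩, every element is equal to exactly one word in the set {1} ∪ {aⁿ : n ≥ 1} ∪ {bᵐ : m ≥ 1} ∪ {aⁿbᵐ : n,m ≥ 1} ∪ {bᵐa : m ≥ 1} ∪ {aⁿbᵐa : n,m ≥ 1}. -/
/-- The free monoid on two letters `a = of false`, `b = of true`. -/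
abbrev KleinWord := FreeMonoid Bool

/-- The defining relation of the Klein bottle monoid: `bab = a`. -/
def kleinRel : KleinWord → KleinWord → Prop := fun x y =>
  x = FreeMonoid.of true * FreeMonoid.of false * FreeMonoid.of true ∧
  y = FreeMonoid.of false

/-- The Klein bottle monoid `K⁺ = ⟨a, b | bab = a⟩`. -/
abbrev KleinMonoid := (conGen kleinRel).Quotient

/-- The canonical projection from the free monoid to `K⁺`. -/
def kleinMk : KleinWord →* KleinMonoid := Con.mk' (conGen kleinRel)

/-- The set of normal-form words:
`{1} ∪ {aⁿ} ∪ {bᵐ} ∪ {aⁿbᵐ} ∪ {bᵐa} ∪ {aⁿbᵐa}` with `n, m ≥ 1`. -/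
def KleinNF (w : KleinWord) : Prop :=
  letI a : KleinWord := FreeMonoid.of false
  letI b : KleinWord := FreeMonoid.of true
  w = 1 ∨
  (∃ n, 1 ≤ n ∧ w = a ^ n) ∨
  (∃ m, 1 ≤ m ∧ w = b ^ m) ∨
  (∃ n m, 1 ≤ n ∧ 1 ≤ m ∧ w = a ^ n * b ^ m) ∨
  (∃ m, 1 ≤ m ∧ w = b ^ m * a) ∨
  (∃ n m, 1 ≤ n ∧ 1 ≤ m ∧ w = a ^ n * b ^ m * a)

abbrev wA : KleinWord := FreeMonoid.of false
abbrev wB : KleinWord := FreeMonoid.of true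

lemma klein_rel_mk : kleinMk (wB * wA * wB) = kleinMk wA :=
  (Con.eq _).mpr (ConGen.Rel.of _ _ ⟨rfl, rfl⟩)

lemma klein_baa : kleinMk (wB * wA * wA) = kleinMk (wA * wA * wB) := by
  have key : wB * wA * (wB * wA * wB) = (wB * wA * wB) * (wA * wB) := by
    simp [mul_assoc]
  calc kleinMk (wB * wA * wA) = kleinMk (wB*wA) * kleinMk wA := by rw [← map_mul]
  _ = kleinMk (wB*wA) * kleinMk (wB*wA*wB) := by rw [klein_rel_mk]
  _ = kleinMk ((wB*wA*wB) * (wA*wB)) := by rw [← map_mul, key]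
  _ = kleinMk wA * kleinMk (wA*wB) := by rw [map_mul, klein_rel_mk]
  _ = kleinMk (wA*wA*wB) := by rw [← map_mul, ← mul_assoc]

lemma klein_bm_aa (m : ℕ) : kleinMk (wB ^ m * (wA * wA)) = kleinMk (wA * wA * wB ^ m) := by
  induction m with
  | zero => simp
  | succ m ih =>
    have h1 : wB ^ (m+1) * (wA * wA) = wB ^ m * (wB * wA * wA) := by
      rw [pow_succ]; simp [mul_assoc]
    rw [h1, map_mul, klein_baa, ← map_mul]
    have h2 : wB ^ m * (wA * wA * wB) = (wB ^ m * (wA * wA)) * wB := by simp [mul_assoc]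
    rw [h2, map_mul, ih, ← map_mul, pow_succ, mul_assoc]

lemma klein_pow_bab (k : ℕ) :
    kleinMk (wB ^ (k+1) * wA * FreeMonoid.of true) = kleinMk (wB ^ k * wA) := by
  have h : wB ^ (k+1) * wA * FreeMonoid.of true = wB ^ k * (wB * wA * wB) := by
    rw [pow_succ]; simp [wB, mul_assoc]
  rw [h, map_mul, klein_rel_mk, ← map_mul]

lemma klein_step (v : KleinWord) (hv : KleinNF v) (x : Bool) :
    ∃ v', KleinNF v' ∧ kleinMk v' = kleinMk (v * FreeMonoid.of x) := by
  simp only [KleinNF] at hv ⊢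
  cases x
  · -- append a
    rcases hv with rfl|⟨n,hn,rfl⟩|⟨m,hm,rfl⟩|⟨n,m,hn,hm,rfl⟩|⟨m,hm,rfl⟩|⟨n,m,hn,hm,rfl⟩
    · exact ⟨wA^1, Or.inr (Or.inl ⟨1, le_refl _, rfl⟩), by simp [wA]⟩
    · exact ⟨wA^(n+1), Or.inr (Or.inl ⟨n+1, by omega, rfl⟩), by rw [pow_succ]⟩
    · exact ⟨wB^m * wA, Or.inr (Or.inr (Or.inr (Or.inr (Or.inl ⟨m, hm, rfl⟩)))), rfl⟩
    · exact ⟨wA^n * wB^m * wA,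
        Or.inr (Or.inr (Or.inr (Or.inr (Or.inr ⟨n, m, hn, hm, rfl⟩)))), rfl⟩
    · refine ⟨wA^2 * wB^m,
        Or.inr (Or.inr (Or.inr (Or.inl ⟨2, m, by omega, hm, rfl⟩))), ?_⟩
      have h : wB ^ m * wA * FreeMonoid.of false = wB ^ m * (wA * wA) := by
        simp [wA, mul_assoc]
      rw [h, klein_bm_aa]
      all_goals (congr 1 <;> rw [sq])
    · refine ⟨wA^(n+2) * wB^m,
        Or.inr (Or.inr (Or.inr (Or.inl ⟨n+2, m, by omega, hm, rfl⟩))), ?_⟩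
      have h : wA^n * wB ^ m * wA * FreeMonoid.of false = wA^n * (wB ^ m * (wA * wA)) := by
        simp [wA, mul_assoc]
      rw [h]
      calc kleinMk (wA^(n+2) * wB^m)
          = kleinMk (wA^n) * kleinMk (wA * wA * wB^m) := by
            rw [← map_mul]; congr 1
            rw [show n+2 = n+1+1 from rfl, pow_succ, pow_succ]; simp [mul_assoc]
        _ = kleinMk (wA^n) * kleinMk (wB^m * (wA * wA)) := by rw [klein_bm_aa]
        _ = kleinMk (wA ^ n * (wB ^ m * (wA * wA))) := by rw [← map_mul]
  · -- append b
    rcases hv with rfl|⟨n,hn,rfl⟩|⟨m,hm,rfl⟩|⟨n,m,hn,hm,rfl⟩|⟨m,hm,rfl⟩|⟨n,m,hn,hm,rfl⟩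
    · exact ⟨wB^1, Or.inr (Or.inr (Or.inl ⟨1, le_refl _, rfl⟩)), by simp [wB]⟩
    · exact ⟨wA^n * wB^1, Or.inr (Or.inr (Or.inr (Or.inl ⟨n, 1, hn, le_refl _, rfl⟩))),
        by simp [wB]⟩
    · exact ⟨wB^(m+1), Or.inr (Or.inr (Or.inl ⟨m+1, by omega, rfl⟩)), by rw [pow_succ]⟩
    · refine ⟨wA^n * wB^(m+1), Or.inr (Or.inr (Or.inr (Or.inl ⟨n, m+1, hn, by omega, rfl⟩))), ?_⟩
      rw [pow_succ, ← mul_assoc]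
    · obtain ⟨k, rfl⟩ : ∃ k, m = k + 1 := ⟨m - 1, by omega⟩
      rcases k with _|k
      · exact ⟨wA^1, Or.inr (Or.inl ⟨1, le_refl _, rfl⟩), by rw [klein_pow_bab]; simp⟩
      · exact ⟨wB^(k+1) * wA, Or.inr (Or.inr (Or.inr (Or.inr (Or.inl ⟨k+1, by omega, rfl⟩)))),
          by rw [klein_pow_bab]⟩
    · obtain ⟨k, rfl⟩ : ∃ k, m = k + 1 := ⟨m - 1, by omega⟩
      have h : wA^n * wB ^ (k+1) * wA * FreeMonoid.of true
          = wA^n * (wB ^ (k+1) * wA * FreeMonoid.of true) := by simp [mul_assoc]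
      rcases k with _|k
      · refine ⟨wA^(n+1), Or.inr (Or.inl ⟨n+1, by omega, rfl⟩), ?_⟩
        rw [h]
        calc kleinMk (wA^(n+1)) = kleinMk (wA^n) * kleinMk (wB^0 * wA) := by
              rw [← map_mul]
              all_goals (congr 1 <;> simp [pow_succ])
          _ = kleinMk (wA^n) * kleinMk (wB^(0+1) * wA * FreeMonoid.of true) := by
              rw [klein_pow_bab]
          _ = kleinMk (wA ^ n * (wB ^ (0+1) * wA * FreeMonoid.of true)) := by rw [← map_mul]
      · refine ⟨wA^n * wB^(k+1) * wA,
          Or.inr (Or.inr (Or.inr (Or.inr (Or.inr ⟨n, k+1, hn, by omega, rfl⟩)))), ?_⟩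
        rw [h]
        calc kleinMk (wA^n * wB^(k+1) * wA)
            = kleinMk (wA^n) * kleinMk (wB^(k+1) * wA) := by rw [← map_mul, mul_assoc]
          _ = kleinMk (wA^n) * kleinMk (wB^(k+1+1) * wA * FreeMonoid.of true) := by
              rw [klein_pow_bab]
          _ = kleinMk (wA ^ n * (wB ^ (k+1+1) * wA * FreeMonoid.of true)) := by rw [← map_mul]

lemma klein_exists (w : KleinWord) : ∃ v, KleinNF v ∧ kleinMk v = kleinMk w := by
  obtain ⟨l, rfl⟩ : ∃ l : List Bool, FreeMonoid.ofList l = w :=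
    ⟨FreeMonoid.toList w, FreeMonoid.ofList_toList w⟩
  induction l using List.reverseRecOn with
  | nil => exact ⟨1, Or.inl rfl, by simp⟩
  | append_singleton l x ih =>
    obtain ⟨v, hv, hmk⟩ := ih
    obtain ⟨v', hv', hmk'⟩ := klein_step v hv x
    refine ⟨v', hv', ?_⟩
    rw [hmk', map_mul, hmk, ← map_mul, ← FreeMonoid.ofList_singleton, ← FreeMonoid.ofList_append]

/-- Sign of an integer's parity. -/
def kSg (n : ℤ) : ℤ := if Even n then 1 else -1

def kEndA : Function.End (ℤ × ℤ) := fun p => (p.1 + 1, p.2)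
def kEndB : Function.End (ℤ × ℤ) := fun p => (p.1, p.2 + kSg p.1)

def kPhi : KleinWord →* Function.End (ℤ × ℤ) :=
  FreeMonoid.lift (fun x => if x then kEndB else kEndA)

lemma kPhi_a : kPhi wA = kEndA := by simp [kPhi, wA]
lemma kPhi_b : kPhi wB = kEndB := by simp [kPhi, wB]

lemma kSg_add_one (n : ℤ) : kSg n + kSg (n+1) = 0 := by
  rcases Int.even_or_odd n with h | h
  · simp [kSg, h, Int.even_add_one, Int.not_even_iff_odd, Even.add_one h, Int.not_odd_iff_even.mpr h]
  · simp [kSg, Int.not_even_iff_odd.mpr h, Int.even_add_one, Odd.add_one h]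

lemma kPhi_rel : ∀ x y, kleinRel x y → kPhi x = kPhi y := by
  rintro x y ⟨rfl, rfl⟩
  show kPhi (wB * wA * wB) = kPhi wA
  rw [map_mul, map_mul, kPhi_a, kPhi_b]
  funext p
  show kEndB (kEndA (kEndB p)) = kEndA p
  simp only [kEndA, kEndB]
  have := kSg_add_one p.1
  ext <;> simp <;> omega

lemma kPhi_eq_of_mk_eq {v w : KleinWord} (h : kleinMk v = kleinMk w) : kPhi v = kPhi w := by
  have hle : conGen kleinRel ≤ Con.ker kPhi :=
    Con.conGen_le.mpr (by intro x y hxy; exact kPhi_rel x y hxy)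
  exact hle ((Con.eq _).mp h)

lemma kPhi_a_pow (n : ℕ) (p : ℤ × ℤ) : kPhi (wA ^ n) p = (p.1 + n, p.2) := by
  induction n with
  | zero => rw [pow_zero, map_one]; show p = _; simp
  | succ n ih =>
    rw [pow_succ', map_mul]
    show kPhi wA (kPhi (wA ^ n) p) = _
    rw [ih, kPhi_a]
    show ((p.1 + (n:ℤ)) + 1, p.2) = _
    push_cast
    ring_nf

lemma kPhi_b_pow (m : ℕ) (p : ℤ × ℤ) : kPhi (wB ^ m) p = (p.1, p.2 + m * kSg p.1) := by
  induction m with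
  | zero => rw [pow_zero, map_one]; show p = _; simp
  | succ m ih =>
    rw [pow_succ', map_mul]
    show kPhi wB (kPhi (wB ^ m) p) = _
    rw [ih, kPhi_b]
    show (p.1, (p.2 + (m:ℤ) * kSg p.1) + kSg p.1) = _
    push_cast
    ring_nf

lemma kSg_zero : kSg 0 = 1 := by simp [kSg]
lemma kSg_one : kSg 1 = -1 := by simp [kSg]

lemma kEval_one : kPhi (1 : KleinWord) (0, 0) = ((0:ℤ), (0:ℤ)) := by
  rw [map_one]; rfl

lemma kEval_a (n : ℕ) : kPhi (wA ^ n) (0, 0) = ((n:ℤ), (0:ℤ)) := by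
  rw [kPhi_a_pow]; simp

lemma kEval_b (m : ℕ) : kPhi (wB ^ m) (0, 0) = ((0:ℤ), (m:ℤ)) := by
  rw [kPhi_b_pow]; simp [kSg_zero]

lemma kEval_ab (n m : ℕ) : kPhi (wA ^ n * wB ^ m) (0, 0) = ((n:ℤ), (m:ℤ)) := by
  rw [map_mul]
  show kPhi (wA ^ n) (kPhi (wB ^ m) (0,0)) = _
  rw [kEval_b, kPhi_a_pow]
  simp

lemma kEval_ba (m : ℕ) : kPhi (wB ^ m * wA) (0, 0) = ((1:ℤ), -(m:ℤ)) := by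
  rw [map_mul]
  show kPhi (wB ^ m) (kPhi wA (0,0)) = _
  rw [kPhi_a]
  show kPhi (wB ^ m) ((0:ℤ)+1, (0:ℤ)) = _
  rw [kPhi_b_pow]
  simp [kSg_one]

lemma kEval_aba (n m : ℕ) : kPhi (wA ^ n * wB ^ m * wA) (0, 0) = ((n:ℤ)+1, -(m:ℤ)) := by
  rw [mul_assoc, map_mul]
  show kPhi (wA ^ n) (kPhi (wB ^ m * wA) (0,0)) = _
  rw [kEval_ba, kPhi_a_pow]
  simp; ring

lemma klein_nf_unique {v w : KleinWord} (hv : KleinNF v) (hw : KleinNF w)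
    (h : kleinMk v = kleinMk w) : v = w := by
  have he : kPhi v (0, 0) = kPhi w (0, 0) := by rw [kPhi_eq_of_mk_eq h]
  simp only [KleinNF] at hv hw
  rcases hv with rfl|⟨n,hn,rfl⟩|⟨m,hm,rfl⟩|⟨n,m,hn,hm,rfl⟩|⟨m,hm,rfl⟩|⟨n,m,hn,hm,rfl⟩ <;>
    rcases hw with rfl|⟨n',hn',rfl⟩|⟨m',hm',rfl⟩|⟨n',m',hn',hm',rfl⟩|⟨m',hm',rfl⟩|⟨n',m',hn',hm',rfl⟩ <;>
    simp only [kEval_one, kEval_a, kEval_b, kEval_ab, kEval_ba, kEval_aba, Prod.mk.injEq, and_true, true_and] at he <;>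
    first
    | rfl
    | (exfalso; omega)
    | (have h1 : n = n' := (by omega); subst h1; rfl)
    | (have h1 : m = m' := (by omega); subst h1; rfl)
    | (have h1 : n = n' := (by omega); have h2 : m = m' := (by omega); subst h1; subst h2; rfl)

/-- Every element of the Klein bottle monoid `K⁺ = ⟨a, b | bab = a⟩` is equal to
exactly one word of the set `{1} ∪ {aⁿ} ∪ {bᵐ} ∪ {aⁿbᵐ} ∪ {bᵐa} ∪ {aⁿbᵐa}`. -/
theorem klein_unique_normal_form (x : KleinMonoid) :
    ∃! w : KleinWord, KleinNF w ∧ kleinMk w = x := by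
  obtain ⟨w, rfl⟩ := Con.mk'_surjective (c := conGen kleinRel) x
  obtain ⟨v, hv, hmk⟩ := klein_exists w
  refine ⟨v, ⟨hv, hmk⟩, ?_⟩
  rintro y ⟨hy, hyeq⟩
  exact klein_nf_unique hy hv (hyeq.trans hmk.symm)
end

section
/- The set {s_i² − 1 (1 ≤ i ≤ n−1), s_i s_j − s_j s_i (i − j ≥ 2), s_{i+1} s_i s_{i−1} ⋯ s_j s_{i+1} − s_i s_{i+1} s_i s_{i−1} ⋯ s_j (j ≤ i+1)} is a Gröbner–Shirshov basis for the defining ideal of the group algebra of S_n with respect to the deg-lex order with s_i > s_j when i > j. -/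
set_option maxHeartbeats 1000000


noncomputable section

/-- The free associative algebra on `m` generators `s₀, …, s_{m−1}`, realized as
the monoid algebra of the free monoid on `Fin m`. -/
abbrev FreeAlg (K : Type) [Field K] (m : ℕ) := MonoidAlgebra K (FreeMonoid (Fin m))

/-- The degree-lexicographic order on words, extending `s₀ < s₁ < ⋯ < s_{m−1}`:
`u < v` iff `u` is shorter than `v`, or they have equal length and `u` is
lexicographically smaller. -/
def DegLexLT {m : ℕ} (u v : FreeMonoid (Fin m)) : Prop :=
  u.length < v.length ∨
    (u.length = v.length ∧ List.Lex (· < ·) (FreeMonoid.toList u) (FreeMonoid.toList v))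

/-- `w` is the leading word of `f` with respect to the deg-lex order. -/
def IsLeadingWord {K : Type} [Field K] {m : ℕ} (f : FreeAlg K m)
    (w : FreeMonoid (Fin m)) : Prop :=
  w ∈ f.coeff.support ∧ ∀ u ∈ f.coeff.support, u ≠ w → DegLexLT u w

/-- The monomial corresponding to a word. -/
def mono {K : Type} [Field K] {m : ℕ} (w : FreeMonoid (Fin m)) : FreeAlg K m :=
  MonoidAlgebra.single w 1

/-- The descending word `[i, i−1, …, j]` (for `j ≤ i`). -/
def descWord {m : ℕ} (i : Fin m) (j : ℕ) : FreeMonoid (Fin m) :=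
  FreeMonoid.ofList ((List.range ((i : ℕ) + 1 - j)).map
    (fun t => ⟨(i : ℕ) - t, lt_of_le_of_lt (Nat.sub_le _ _) i.isLt⟩))

/-- The claimed Gröbner–Shirshov basis for the defining ideal of `K[S_n]`
(with `m = n − 1` generators): `sᵢ² − 1`; `sᵢsⱼ − sⱼsᵢ` for `i − j ≥ 2`; and
`s_{i+1} sᵢ s_{i−1} ⋯ sⱼ s_{i+1} − sᵢ s_{i+1} sᵢ s_{i−1} ⋯ sⱼ` for `j ≤ i`. -/
def coxeterGSB (K : Type) [Field K] (m : ℕ) : Set (FreeAlg K m) :=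
  {f | (∃ i : Fin m, f = mono (FreeMonoid.of i * FreeMonoid.of i) - 1) ∨
    (∃ i j : Fin m, (j : ℕ) + 2 ≤ (i : ℕ) ∧
      f = mono (FreeMonoid.of i * FreeMonoid.of j)
        - mono (FreeMonoid.of j * FreeMonoid.of i)) ∨
    (∃ (i : Fin m) (hi : (i : ℕ) + 1 < m) (j : ℕ), j ≤ (i : ℕ) ∧
      f = mono (FreeMonoid.of ⟨(i : ℕ) + 1, hi⟩ * descWord i j
            * FreeMonoid.of ⟨(i : ℕ) + 1, hi⟩)
        - mono (FreeMonoid.of i * FreeMonoid.of ⟨(i : ℕ) + 1, hi⟩ * descWord i j))}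

/-- Membership in the two-sided ideal generated by a set `S`. -/
def MemTwoSidedIdeal {K : Type} [Field K] {m : ℕ} (S : Set (FreeAlg K m))
    (f : FreeAlg K m) : Prop :=
  f ∈ AddSubgroup.closure {x : FreeAlg K m | ∃ u g v, g ∈ S ∧ x = u * g * v}

namespace GSB
open FreeMonoid
open scoped Classical

section Words
variable {m : ℕ}

def enc : List (Fin m) → ℕ
  | [] => 0
  | a :: l => ((a : ℕ) + 1) * (m + 1) ^ l.length + enc l

lemma enc_lt (l : List (Fin m)) : enc l < (m + 1) ^ l.length := by
  induction l with
  | nil => simp [enc]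
  | cons a l ih =>
    have ha : (a : ℕ) + 1 ≤ m := a.isLt
    have hB : 0 < (m+1) ^ l.length := Nat.pow_pos (by omega)
    simp only [enc, List.length_cons, pow_succ]
    nlinarith

lemma le_enc (l : List (Fin m)) (h : l ≠ []) : (m + 1) ^ (l.length - 1) ≤ enc l := by
  cases l with
  | nil => simp at h
  | cons a l =>
    simp only [enc, List.length_cons, Nat.add_sub_cancel]
    calc (m+1) ^ l.length ≤ ((a:ℕ)+1) * (m+1) ^ l.length :=
          Nat.le_mul_of_pos_left _ (by omega)
      _ ≤ _ := Nat.le_add_right _ _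

lemma enc_lt_of_length_lt {u v : List (Fin m)} (h : u.length < v.length) : enc u < enc v := by
  have h1 := enc_lt u
  have h2 := le_enc v (by intro hv; rw [hv] at h; simp at h)
  have : (m+1) ^ u.length ≤ (m+1) ^ (v.length - 1) :=
    Nat.pow_le_pow_right (by omega) (by omega)
  omega

lemma enc_lt_of_lex {u v : List (Fin m)} (hlen : u.length = v.length)
    (h : List.Lex (· < ·) u v) : enc u < enc v := by
  induction h with
  | nil => simp at hlen
  | @rel a l₁ b l₂ hab =>
    simp only [List.length_cons, Nat.add_right_cancel_iff] at hlen
    simp only [enc]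
    have h1 := enc_lt l₁
    have hab' : (a : ℕ) < (b : ℕ) := hab
    have h2 : ((a:ℕ)+1) * (m+1) ^ l₁.length + enc l₁ < ((a:ℕ)+2) * (m+1)^l₁.length := by
      nlinarith
    have h3 : ((a:ℕ)+2) * (m+1)^l₁.length ≤ ((b:ℕ)+1) * (m+1)^l₂.length := by
      rw [← hlen]
      exact Nat.mul_le_mul_right _ (by omega)
    have h4 : ((b:ℕ)+1) * (m+1)^l₂.length ≤ ((b:ℕ)+1) * (m+1)^l₂.length + enc l₂ := Nat.le_add_right _ _
    omega
  | @cons a l₁ l₂ h ih =>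
    simp only [List.length_cons, Nat.add_right_cancel_iff] at hlen
    simp only [enc, hlen]
    have := ih hlen
    omega

def encW (u : FreeMonoid (Fin m)) : ℕ := enc u.toList

lemma length_eq (u : FreeMonoid (Fin m)) : u.length = u.toList.length := rfl

lemma encW_lt_of_degLex {u v : FreeMonoid (Fin m)} (h : DegLexLT u v) : encW u < encW v := by
  rcases h with h | ⟨h1, h2⟩
  · exact enc_lt_of_length_lt h
  · exact enc_lt_of_lex h1 h2

lemma lex_trichotomy : ∀ (u v : List (Fin m)), u.length = v.length → u ≠ v →
    List.Lex (· < ·) u v ∨ List.Lex (· < ·) v u := by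
  intro u
  induction u with
  | nil => intro v h hne; cases v with
    | nil => exact absurd rfl hne
    | cons b l => simp at h
  | cons a u ih =>
    intro v h hne
    cases v with
    | nil => simp at h
    | cons b l =>
      rcases lt_trichotomy a b with hab | hab | hab
      · exact Or.inl (List.Lex.rel hab)
      · subst hab
        have : u ≠ l := by intro he; exact hne (by rw [he])
        rcases ih l (by simpa using h) this with h' | h'
        · exact Or.inl (List.Lex.cons h')
        · exact Or.inr (List.Lex.cons h')
      · exact Or.inr (List.Lex.rel hab)

lemma degLex_trichotomy (u v : FreeMonoid (Fin m)) (hne : u ≠ v) :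
    DegLexLT u v ∨ DegLexLT v u := by
  rcases lt_trichotomy u.length v.length with h | h | h
  · exact Or.inl (Or.inl h)
  · have hne' : u.toList ≠ v.toList := by
      intro he; exact hne (FreeMonoid.toList.injective he)
    rcases lex_trichotomy u.toList v.toList h hne' with h' | h'
    · exact Or.inl (Or.inr ⟨h, h'⟩)
    · exact Or.inr (Or.inr ⟨h.symm, h'⟩)
  · exact Or.inr (Or.inl h)

lemma degLex_of_encW_lt {u v : FreeMonoid (Fin m)} (h : encW u < encW v) : DegLexLT u v := by
  rcases degLex_trichotomy u v (by intro he; subst he; omega) with h' | h'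
  · exact h'
  · exact absurd (encW_lt_of_degLex h') (by omega)

lemma lex_append_right {x y : List (Fin m)} (hlen : x.length = y.length)
    (h : List.Lex (· < ·) x y) (v : List (Fin m)) :
    List.Lex (· < ·) (x ++ v) (y ++ v) := by
  induction h with
  | nil => simp at hlen
  | rel hab => exact List.Lex.rel hab
  | cons h ih =>
    exact List.Lex.cons (ih (by simpa using hlen))

lemma lex_prepend (u : List (Fin m)) {x y : List (Fin m)} (h : List.Lex (· < ·) x y) :
    List.Lex (· < ·) (u ++ x) (u ++ y) := by
  induction u with
  | nil => exact h
  | cons a u ih => exact List.Lex.cons ih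

lemma degLex_mul {x y : FreeMonoid (Fin m)} (u v : FreeMonoid (Fin m)) (h : DegLexLT x y) :
    DegLexLT (u * x * v) (u * y * v) := by
  have hl : ∀ a b : FreeMonoid (Fin m), (a * b).length = a.length + b.length :=
    fun a b => by simp [FreeMonoid.length_mul]
  rcases h with h | ⟨h1, h2⟩
  · left; simp only [hl]; omega
  · right
    constructor
    · simp only [hl]; omega
    · have : ∀ a b : FreeMonoid (Fin m), (a * b).toList = a.toList ++ b.toList := fun a b => rfl
      simp only [this, List.append_assoc]
      exact lex_prepend _ (lex_append_right h1 h2 _)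


end Words

section CC
variable {m : ℕ}
lemma fm_ext {u v : FreeMonoid (Fin m)}
    (h : u.toList.map Fin.val = v.toList.map Fin.val) : u = v := by
  have := List.map_injective_iff.mpr (Fin.val_injective) h
  exact FreeMonoid.toList.injective this

lemma range_map_eq_range' (k j : ℕ) :
    (List.range k).map (fun t => j + k - 1 - t) = (List.range' j k).reverse := by
  induction k generalizing j with
  | zero => simp
  | succ k ih =>
    rw [List.range_succ, List.map_append, List.range'_succ, List.reverse_cons]
    congr 1
    · rw [← ih (j + 1)]
      apply List.map_congr_left
      intro t ht
      omega
    · simp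

lemma descWord_coe (i : Fin m) (j : ℕ) :
    (descWord i j).toList.map Fin.val = (List.range' j ((i : ℕ) + 1 - j)).reverse := by
  show (List.map _ (List.map _ _)) = _
  rw [List.map_map, ← range_map_eq_range' ((i : ℕ) + 1 - j) j]
  apply List.map_congr_left
  intro t ht
  simp only [List.mem_range] at ht
  simp only [Function.comp]
  omega

lemma descWord_empty (i : Fin m) (j : ℕ) (h : (i : ℕ) < j) : descWord i j = 1 := by
  apply fm_ext
  rw [descWord_coe]
  have : (i : ℕ) + 1 - j = 0 := by omega
  simp [this, FreeMonoid.toList_one]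

lemma descWord_self (i : Fin m) : descWord i (i : ℕ) = of i := by
  apply fm_ext
  rw [descWord_coe]
  have : (i : ℕ) + 1 - (i : ℕ) = 1 := by omega
  simp [this, FreeMonoid.toList_of]

lemma descWord_right (i : Fin m) (j : ℕ) (hj : j ≤ (i : ℕ)) :
    descWord i j = descWord i (j + 1) * of ⟨j, lt_of_le_of_lt hj i.isLt⟩ := by
  apply fm_ext
  rw [descWord_coe, FreeMonoid.toList_mul, List.map_append, descWord_coe,
    FreeMonoid.toList_of]
  have h1 : (i : ℕ) + 1 - j = ((i : ℕ) + 1 - (j + 1)) + 1 := by omega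
  rw [h1, List.range'_succ, List.reverse_cons]
  simp

lemma descWord_split (i : Fin m) (j b : ℕ) (hj : j ≤ b) (hb : b ≤ (i : ℕ)) :
    descWord i j = descWord i (b + 1) * descWord ⟨b, lt_of_le_of_lt hb i.isLt⟩ j := by
  apply fm_ext
  rw [descWord_coe, FreeMonoid.toList_mul, List.map_append, descWord_coe, descWord_coe]
  rw [← List.reverse_append]
  have h2 : b + 1 - j = b + 1 - j := rfl
  rw [show ((⟨b, lt_of_le_of_lt hb i.isLt⟩ : Fin m) : ℕ) = b from rfl]
  rw [show (List.range' j (b + 1 - j) ++ List.range' (b+1) ((i:ℕ) + 1 - (b+1))) =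
      List.range' j ((i:ℕ) + 1 - j) from ?_]
  · have := List.range'_append (s := j) (m := b + 1 - j) (n := (i:ℕ) + 1 - (b+1)) (step := 1)
    simp only [one_mul, mul_one] at this
    rw [show j + (b + 1 - j) = b + 1 by omega] at this
    rw [show (b + 1 - j) + ((i:ℕ) + 1 - (b+1)) = (i:ℕ) + 1 - j by omega] at this
    exact this

lemma descWord_left (i : Fin m) (j : ℕ) (hj : j < (i : ℕ)) :
    descWord i j = of i * descWord ⟨(i : ℕ) - 1, by omega⟩ j := by
  apply fm_ext
  rw [descWord_coe, FreeMonoid.toList_mul, List.map_append, descWord_coe,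
    FreeMonoid.toList_of]
  rw [show ((⟨(i:ℕ) - 1, by omega⟩ : Fin m) : ℕ) = (i:ℕ) - 1 from rfl]
  have h1 : (i : ℕ) + 1 - j = (((i:ℕ) - 1) + 1 - j) + 1 := by omega
  rw [h1]
  have hc : List.range' j (((i:ℕ) - 1) + 1 - j + 1) =
      List.range' j (((i:ℕ) - 1) + 1 - j) ++ [j + 1 * (((i:ℕ) - 1) + 1 - j)] :=
    List.range'_concat (s := j) (n := ((i:ℕ) - 1) + 1 - j)
  rw [hc, List.reverse_append]
  simp only [List.reverse_cons, List.reverse_nil, List.nil_append, List.map_cons,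
    List.map_nil, List.singleton_append, FreeMonoid.toList_of]
  congr 1
  omega

lemma descWord_letters (i : Fin m) (j : ℕ) :
    ∀ a ∈ (descWord i j).toList, j ≤ (a : ℕ) ∧ (a : ℕ) ≤ (i : ℕ) := by
  intro a ha
  have : (a : ℕ) ∈ (descWord i j).toList.map Fin.val := List.mem_map_of_mem ha
  rw [descWord_coe, List.mem_reverse, List.mem_range'_1] at this
  omega

lemma descWord_ne_one (i : Fin m) (j : ℕ) (hj : j ≤ (i : ℕ)) : descWord i j ≠ 1 := by
  intro h
  have := congrArg (fun w => (FreeMonoid.toList w).map Fin.val) h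
  simp only [descWord_coe] at this
  have h2 : (i : ℕ) + 1 - j ≠ 0 := by omega
  rw [FreeMonoid.toList_one] at this
  simp only [List.map_nil] at this
  have h3 := congrArg List.length this
  simp at h3
  omega

lemma descWord_length' (i : Fin m) (j : ℕ) :
    (descWord i j).length = (i : ℕ) + 1 - j := by
  show (List.map _ _).length = _
  simp

-- Section D: permutation representation
def sw {m : ℕ} (a : Fin m) : Equiv.Perm (Fin (m + 1)) :=
  Equiv.swap a.castSucc a.succ

def pihom {m : ℕ} : FreeMonoid (Fin m) →* Equiv.Perm (Fin (m + 1)) :=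
  FreeMonoid.lift sw

lemma pihom_of (a : Fin m) : pihom (of a) = sw a := FreeMonoid.lift_eval_of _ _

lemma sw_fix {a : Fin m} {x : Fin (m + 1)} (h1 : (x : ℕ) ≠ (a : ℕ))
    (h2 : (x : ℕ) ≠ (a : ℕ) + 1) : sw a x = x := by
  apply Equiv.swap_apply_of_ne_of_ne
  · intro he; apply h1; rw [he]; simp
  · intro he; apply h2; rw [he]; simp

lemma sw_lo (a : Fin m) : sw a a.castSucc = a.succ := Equiv.swap_apply_left _ _
lemma sw_hi (a : Fin m) : sw a a.succ = a.castSucc := Equiv.swap_apply_right _ _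

lemma sw_sq (a : Fin m) : sw a * sw a = 1 := Equiv.swap_mul_self _ _

lemma sw_commute {a c : Fin m} (h : (a : ℕ) + 1 < (c : ℕ)) :
    sw a * sw c = sw c * sw a := by
  have key : sw a * sw c * (sw a)⁻¹ = sw c := by
    have h1 : sw a c.castSucc = c.castSucc := sw_fix (by simp; omega) (by simp; omega)
    have h2 : sw a c.succ = c.succ := sw_fix (by simp; omega) (by simp; omega)
    calc sw a * sw c * (sw a)⁻¹ = sw a * Equiv.swap c.castSucc c.succ * (sw a)⁻¹ := rfl
      _ = Equiv.swap (sw a c.castSucc) (sw a c.succ) := (Equiv.swap_apply_apply _ _ _).symm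
      _ = sw c := by rw [h1, h2]; rfl
  calc sw a * sw c = sw a * sw c * (sw a)⁻¹ * sw a := by group
    _ = sw c * sw a := by rw [key]

lemma sw_braid {a c : Fin m} (h : (a : ℕ) + 1 = (c : ℕ)) :
    sw c * sw a * sw c = sw a * sw c * sw a := by
  have hca : c.castSucc = a.succ := by ext; simp; omega
  have hinvc : (sw c)⁻¹ = sw c := by
    rw [eq_comm, eq_inv_iff_mul_eq_one]; exact sw_sq c
  have hinva : (sw a)⁻¹ = sw a := by
    rw [eq_comm, eq_inv_iff_mul_eq_one]; exact sw_sq a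
  have lhs : sw c * sw a * sw c = Equiv.swap a.castSucc c.succ := by
    have h1 : sw c a.castSucc = a.castSucc := sw_fix (by simp; omega) (by simp; omega)
    have h2 : sw c a.succ = c.succ := by rw [← hca, sw_lo]
    calc sw c * sw a * sw c = sw c * Equiv.swap a.castSucc a.succ * (sw c)⁻¹ := by rw [hinvc]; rfl
      _ = Equiv.swap (sw c a.castSucc) (sw c a.succ) := (Equiv.swap_apply_apply _ _ _).symm
      _ = Equiv.swap a.castSucc c.succ := by rw [h1, h2]
  have rhs : sw a * sw c * sw a = Equiv.swap a.castSucc c.succ := by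
    have h1 : sw a c.castSucc = a.castSucc := by rw [hca, sw_hi]
    have h2 : sw a c.succ = c.succ := sw_fix (by simp; omega) (by simp; omega)
    calc sw a * sw c * sw a = sw a * Equiv.swap c.castSucc c.succ * (sw a)⁻¹ := by rw [hinva]; rfl
      _ = Equiv.swap (sw a c.castSucc) (sw a c.succ) := (Equiv.swap_apply_apply _ _ _).symm
      _ = Equiv.swap a.castSucc c.succ := by rw [h1, h2]
  rw [lhs, rhs]

lemma pihom_fix {l : List (Fin m)} {I : ℕ} (hl : ∀ a ∈ l, (a : ℕ) ≤ I)
    {x : Fin (m + 1)} (hx : I + 1 < (x : ℕ)) : pihom (ofList l) x = x := by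
  induction l with
  | nil => rfl
  | cons a l ih =>
    have : ofList (a :: l) = of a * ofList l := rfl
    rw [this, map_mul, Equiv.Perm.mul_apply, ih (fun b hb => hl b (List.mem_cons_of_mem _ hb)),
      pihom_of, sw_fix]
    · have := hl a List.mem_cons_self; omega
    · have := hl a List.mem_cons_self; omega

lemma pihom_desc (i : Fin m) : ∀ (j : ℕ), (hj : j ≤ (i : ℕ)) →
    pihom (descWord i j) ⟨j, by have := i.isLt; omega⟩ = ⟨(i : ℕ) + 1, by have := i.isLt; omega⟩ := by
  have H : ∀ (k j : ℕ), (i : ℕ) - j ≤ k → (hj : j ≤ (i : ℕ)) →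
      pihom (descWord i j) ⟨j, by have := i.isLt; omega⟩ = ⟨(i : ℕ) + 1, by have := i.isLt; omega⟩ := by
    intro k
    induction k with
    | zero =>
      intro j h1 h2
      have : j = (i : ℕ) := by omega
      subst this
      rw [descWord_self, pihom_of]
      have : (⟨(i : ℕ), by omega⟩ : Fin (m+1)) = i.castSucc := by ext; simp
      rw [this, sw_lo]
      ext; simp
    | succ k ih =>
      intro j h1 h2
      rcases eq_or_lt_of_le h2 with he | hlt
      · subst he
        rw [descWord_self, pihom_of]
        have : (⟨(i : ℕ), by omega⟩ : Fin (m+1)) = i.castSucc := by ext; simp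
        rw [this, sw_lo]
        ext; simp
      · rw [descWord_right i j (by omega), map_mul, Equiv.Perm.mul_apply, pihom_of]
        have hj' : (⟨j, by have := i.isLt; omega⟩ : Fin (m+1)) = (⟨j, by have := i.isLt; omega⟩ : Fin m).castSucc := by
          ext; simp
        rw [hj', sw_lo]
        have : ((⟨j, by have := i.isLt; omega⟩ : Fin m).succ : Fin (m+1)) = ⟨j + 1, by omega⟩ := by ext; simp
        rw [this]
        exact ih (j + 1) (by omega) (by omega)
  intro j hj
  exact H ((i : ℕ) - j) j le_rfl hj

lemma pihom_rel3 (i : Fin m) (hi : (i : ℕ) + 1 < m) : ∀ (j : ℕ), j ≤ (i : ℕ) →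
    pihom (of ⟨(i : ℕ) + 1, hi⟩ * descWord i j * of ⟨(i : ℕ) + 1, hi⟩)
      = pihom (of i * of ⟨(i : ℕ) + 1, hi⟩ * descWord i j) := by
  set c : Fin m := ⟨(i : ℕ) + 1, hi⟩ with hc
  have hbraid : sw c * sw i * sw c = sw i * sw c * sw i := sw_braid (by simp [hc])
  have H : ∀ (k j : ℕ), (i : ℕ) - j ≤ k → j ≤ (i : ℕ) →
      sw c * pihom (descWord i j) * sw c = sw i * sw c * pihom (descWord i j) := by
    intro k
    induction k with
    | zero =>
      intro j h1 h2
      have : j = (i : ℕ) := by omega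
      subst this
      rw [descWord_self, pihom_of]
      exact hbraid
    | succ k ih =>
      intro j h1 h2
      rcases eq_or_lt_of_le h2 with he | hlt
      · subst he
        rw [descWord_self, pihom_of]
        exact hbraid
      · rw [descWord_right i j (by omega), map_mul, pihom_of]
        set sj : Equiv.Perm (Fin (m+1)) := sw (⟨j, by have := i.isLt; omega⟩ : Fin m) with hsj
        set D1 := pihom (descWord i (j + 1)) with hD1
        have hcomm : sw c * sj = sj * sw c := (sw_commute (by simp [hc]; omega)).symm
        calc sw c * (D1 * sj) * sw c = (sw c * D1 * sw c) * (sw c * sj * sw c) := by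
              rw [show (sw c * D1 * sw c) * (sw c * sj * sw c)
                  = sw c * D1 * (sw c * sw c) * sj * sw c by group]
              rw [sw_sq]; group
          _ = (sw i * sw c * D1) * (sw c * sj * sw c) := by rw [ih (j+1) (by omega) (by omega)]
          _ = (sw i * sw c * D1) * sj := by
              rw [hcomm]; rw [show sj * sw c * sw c = sj * (sw c * sw c) by group, sw_sq]; group
          _ = sw i * sw c * (D1 * sj) := by group
  intro j hj
  have key := H ((i : ℕ) - j) j le_rfl hj
  rw [map_mul, map_mul, map_mul, map_mul, pihom_of, pihom_of]
  exact key

end CC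

section Alg
variable {K : Type} [Field K] {m : ℕ}

lemma mono_apply (w u : FreeMonoid (Fin m)) :
    (mono w : FreeAlg K m).coeff u = if w = u then 1 else 0 := Finsupp.single_apply

lemma sub_mono_apply (w1 w2 u : FreeMonoid (Fin m)) :
    (mono w1 - mono w2 : FreeAlg K m).coeff u
      = (if w1 = u then (1:K) else 0) - (if w2 = u then 1 else 0) := by
  rw [MonoidAlgebra.coeff_sub, Finsupp.sub_apply, mono_apply, mono_apply]

lemma degLex_ne {u v : FreeMonoid (Fin m)} (h : DegLexLT u v) : u ≠ v := by
  intro he; subst he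
  exact absurd (encW_lt_of_degLex h) (lt_irrefl _)

lemma leading_pair {w1 w2 : FreeMonoid (Fin m)} (hlt : DegLexLT w2 w1) :
    IsLeadingWord (mono w1 - mono w2 : FreeAlg K m) w1 := by
  have hne : w2 ≠ w1 := degLex_ne hlt
  constructor
  · rw [Finsupp.mem_support_iff, sub_mono_apply, if_pos rfl, if_neg hne]
    norm_num
  · intro u hu hune
    rw [Finsupp.mem_support_iff, sub_mono_apply, if_neg (Ne.symm hune)] at hu
    have : w2 = u := by by_contra h; rw [if_neg h] at hu; simp at hu
    subst this; exact hlt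

lemma exists_isLeadingWord (f : FreeAlg K m) (hf : f ≠ 0) : ∃ w, IsLeadingWord f w := by
  have hs : f.coeff.support.Nonempty := Finsupp.support_nonempty_iff.mpr (by simpa using hf)
  obtain ⟨w, hw, hmax⟩ := hs.to_subtype.elim fun _ => f.coeff.support.exists_max_image encW hs
  exact ⟨w, hw, fun u hu hne => by
    rcases degLex_trichotomy u w hne with h | h
    · exact h
    · exact absurd (encW_lt_of_degLex h) (not_lt.mpr (hmax u hu))⟩

lemma isLeadingWord_unique {f : FreeAlg K m} {w w' : FreeMonoid (Fin m)}
    (h : IsLeadingWord f w) (h' : IsLeadingWord f w') : w = w' := by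
  by_contra hne
  have h1 := encW_lt_of_degLex (h.2 w' h'.1 (Ne.symm hne))
  have h2 := encW_lt_of_degLex (h'.2 w h.1 hne)
  omega

lemma toList_smul (a : Fin m) (b : FreeMonoid (Fin m)) (c : Fin m) :
    (of a * b * of c).toList = a :: (b.toList ++ [c]) := by
  simp [toList_mul, toList_of]

lemma descWord_length (i : Fin m) (j : ℕ) : (descWord i j).length = (i:ℕ) + 1 - j := by
  show (List.map _ _).length = _
  simp


end Alg

end GSB

namespace GSB
open FreeMonoid
open scoped Classical
section E
variable {K : Type} [Field K] {m : ℕ}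

lemma dlt1 (i : Fin m) : DegLexLT (1 : FreeMonoid (Fin m)) (of i * of i) := by
  left
  simp [FreeMonoid.length_mul, FreeMonoid.length_of, FreeMonoid.length_one]

lemma dlt2 (i j : Fin m) (h : (j : ℕ) + 2 ≤ (i : ℕ)) :
    DegLexLT (of j * of i) (of i * of j) := by
  right
  refine ⟨by simp [FreeMonoid.length_mul], ?_⟩
  have h1 : (of j * of i : FreeMonoid (Fin m)).toList = [j, i] := rfl
  have h2 : (of i * of j : FreeMonoid (Fin m)).toList = [i, j] := rfl
  rw [h1, h2]
  exact List.Lex.rel (show j < i by rw [Fin.lt_def]; omega)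

lemma dlt3 (i : Fin m) (hi : (i : ℕ) + 1 < m) (j : ℕ) :
    DegLexLT (of i * of ⟨(i : ℕ) + 1, hi⟩ * descWord i j)
      (of ⟨(i : ℕ) + 1, hi⟩ * descWord i j * of ⟨(i : ℕ) + 1, hi⟩) := by
  right
  constructor
  · simp [FreeMonoid.length_mul, FreeMonoid.length_of]; omega
  · rw [FreeMonoid.toList_mul, FreeMonoid.toList_mul, FreeMonoid.toList_mul,
      FreeMonoid.toList_mul, FreeMonoid.toList_of, FreeMonoid.toList_of]
    simp only [List.append_assoc, List.singleton_append]
    exact List.Lex.rel (show i < ⟨(i : ℕ) + 1, hi⟩ by rw [Fin.lt_def]; simp)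

lemma lw1 (i : Fin m) :
    IsLeadingWord (mono (of i * of i) - 1 : FreeAlg K m) (of i * of i) := by
  have h1 : (1 : FreeAlg K m) = mono (1 : FreeMonoid (Fin m)) := MonoidAlgebra.one_def
  rw [h1]
  exact leading_pair (dlt1 i)

lemma lw2 (i j : Fin m) (h : (j : ℕ) + 2 ≤ (i : ℕ)) :
    IsLeadingWord (mono (of i * of j) - mono (of j * of i) : FreeAlg K m)
      (of i * of j) := leading_pair (dlt2 i j h)

lemma lw3 (i : Fin m) (hi : (i : ℕ) + 1 < m) (j : ℕ) :
    IsLeadingWord (mono (of ⟨(i : ℕ) + 1, hi⟩ * descWord i j * of ⟨(i : ℕ) + 1, hi⟩)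
        - mono (of i * of ⟨(i : ℕ) + 1, hi⟩ * descWord i j) : FreeAlg K m)
      (of ⟨(i : ℕ) + 1, hi⟩ * descWord i j * of ⟨(i : ℕ) + 1, hi⟩) :=
  leading_pair (dlt3 i hi j)

def Obstructed (K : Type) [Field K] {m : ℕ} (t : FreeMonoid (Fin m)) : Prop :=
  ∃ g ∈ coxeterGSB K m, ∃ wg, IsLeadingWord g wg ∧ ∃ u v, t = u * wg * v

lemma obstructed_factor {t : FreeMonoid (Fin m)} (p q : FreeMonoid (Fin m))
    (h : Obstructed K t) : Obstructed K (p * t * q) := by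
  obtain ⟨g, hg, wg, hlw, u, v, rfl⟩ := h
  exact ⟨g, hg, wg, hlw, p * u, v * q, by noncomm_ring⟩

lemma obs1 (i : Fin m) (u v : FreeMonoid (Fin m)) :
    Obstructed K (u * (of i * of i) * v) :=
  ⟨_, Or.inl ⟨i, rfl⟩, _, lw1 i, u, v, rfl⟩

lemma obs2 (i j : Fin m) (h : (j : ℕ) + 2 ≤ (i : ℕ)) (u v : FreeMonoid (Fin m)) :
    Obstructed K (u * (of i * of j) * v) :=
  ⟨_, Or.inr (Or.inl ⟨i, j, h, rfl⟩), _, lw2 i j h, u, v, rfl⟩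

lemma obs3 (i : Fin m) (hi : (i : ℕ) + 1 < m) (j : ℕ) (hj : j ≤ (i : ℕ))
    (u v : FreeMonoid (Fin m)) :
    Obstructed K (u * (of ⟨(i : ℕ) + 1, hi⟩ * descWord i j * of ⟨(i : ℕ) + 1, hi⟩) * v) :=
  ⟨_, Or.inr (Or.inr ⟨i, hi, j, hj, rfl⟩), _, lw3 i hi j, u, v, rfl⟩

lemma obs3' (b : Fin m) (j : ℕ) (hj : j < (b : ℕ)) (u v : FreeMonoid (Fin m)) :
    Obstructed K (u * (of b * descWord ⟨(b : ℕ) - 1, by have := b.isLt; omega⟩ j * of b) * v) := by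
  have hb := b.isLt
  set b' : Fin m := ⟨(b : ℕ) - 1, by omega⟩ with hb'
  have hi : (b' : ℕ) + 1 < m := by simp [hb']; omega
  have hbeq : (⟨(b' : ℕ) + 1, hi⟩ : Fin m) = b := by ext; simp [hb']; omega
  have := obs3 (K := K) b' hi j (by simp [hb']; omega) u v
  rwa [hbeq] at this

lemma ofList_append (x y : List (Fin m)) : ofList (x ++ y) = ofList x * ofList y := rfl

lemma runs (K : Type) [Field K] : ∀ t : List (Fin m), ¬ Obstructed K (ofList t) →
    t = [] ∨ ∃ (i : Fin m) (j : ℕ), j ≤ (i : ℕ) ∧ ∃ t₀ : List (Fin m),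
      t = t₀ ++ (descWord i j).toList ∧ ∀ a ∈ t₀, (a : ℕ) < (i : ℕ) := by
  intro t
  induction t using List.reverseRecOn with
  | nil => exact fun _ => Or.inl rfl
  | append_singleton t' b ih =>
    intro hobs
    have hbm := b.isLt
    have hol : ofList (t' ++ [b]) = ofList t' * of b := rfl
    have ht' : ¬ Obstructed K (ofList t') := by
      intro h
      have h2 := obstructed_factor (K := K) 1 (of b) h
      rw [one_mul] at h2
      exact hobs (by rw [hol]; exact h2)
    rcases ih ht' with he | ⟨i, j, hj, t₀, heq, hlt⟩
    · subst he
      refine Or.inr ⟨b, (b : ℕ), le_rfl, [], ?_, by simp⟩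
      simp [descWord_self, FreeMonoid.toList_of]
    · have him := i.isLt
      subst heq
      have hofl : ofList ((t₀ ++ (descWord i j).toList) ++ [b])
          = ofList t₀ * descWord i j * of b := rfl
      have hjfin : ((⟨j, by omega⟩ : Fin m) : ℕ) = j := rfl
      rcases lt_trichotomy ((b : ℕ)) j with hbj | hbj | hbj
      · by_cases hb1 : (b : ℕ) = j - 1
        · -- merge into the run
          refine Or.inr ⟨i, (b : ℕ), by omega, t₀, ?_, hlt⟩
          have hd : descWord i (b : ℕ) = descWord i ((b : ℕ) + 1) * of ⟨(b : ℕ), by omega⟩ :=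
            descWord_right i (b : ℕ) (by omega)
          rw [show (b : ℕ) + 1 = j by omega] at hd
          have : (descWord i (b : ℕ)).toList
              = (descWord i j).toList ++ [(⟨(b : ℕ), by omega⟩ : Fin m)] := by
            rw [hd]; rfl
          rw [this, show (⟨(b : ℕ), by omega⟩ : Fin m) = b from by ext; rfl]
          simp [List.append_assoc]
        · -- b + 2 ≤ j : commutation obstruction
          exfalso
          apply hobs
          rw [hofl, descWord_right i j hj]
          have := obs2 (K := K) ⟨j, by omega⟩ b (by rw [hjfin]; omega)
            (ofList t₀ * descWord i (j + 1)) 1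
          rw [mul_one] at this
          convert this using 1
          noncomm_ring
      · -- b = j : square obstruction
        exfalso
        apply hobs
        rw [hofl, descWord_right i j hj]
        have hbfin : (⟨j, by omega⟩ : Fin m) = b := by ext; simp [hjfin]; omega
        have := obs1 (K := K) b (ofList t₀ * descWord i (j + 1)) 1
        rw [mul_one] at this
        rw [hbfin]
        convert this using 1
        noncomm_ring
      · by_cases hbi : (b : ℕ) ≤ (i : ℕ)
        · -- long braid obstruction
          exfalso
          apply hobs
          rw [hofl, descWord_split i j (b : ℕ) (by omega) hbi]
          have hbfin : (⟨(b : ℕ), by omega⟩ : Fin m) = b := by ext; rfl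
          rw [hbfin, descWord_left b j (by omega)]
          have := obs3' (K := K) b j (by omega) (ofList t₀ * descWord i ((b : ℕ) + 1)) 1
          rw [mul_one] at this
          convert this using 1
          noncomm_ring
        · -- start a new run
          refine Or.inr ⟨b, (b : ℕ), le_rfl, t₀ ++ (descWord i j).toList, ?_, ?_⟩
          · simp [descWord_self, FreeMonoid.toList_of]
          · intro a ha
            rcases List.mem_append.mp ha with h | h
            · have := hlt a h; omega
            · have := (descWord_letters i j a h).2; omega

-- strict version of pihom_fix
lemma pihom_fixlt {l : List (Fin m)} {I : ℕ} (hl : ∀ a ∈ l, (a : ℕ) < I)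
    {x : Fin (m + 1)} (hx : I < (x : ℕ)) : pihom (ofList l) x = x := by
  induction l with
  | nil => rfl
  | cons a l ih =>
    have : ofList (a :: l) = of a * ofList l := rfl
    rw [this, map_mul, Equiv.Perm.mul_apply,
      ih (fun b hb => hl b (List.mem_cons_of_mem _ hb)), pihom_of, sw_fix]
    · have := hl a List.mem_cons_self; omega
    · have := hl a List.mem_cons_self; omega

lemma pihom_decomp (t₀ : List (Fin m)) (i : Fin m) (j : ℕ) (hj : j ≤ (i : ℕ))
    (hlt : ∀ a ∈ t₀, (a : ℕ) < (i : ℕ)) :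
    pihom (ofList (t₀ ++ (descWord i j).toList)) ⟨j, by have := i.isLt; omega⟩
      = ⟨(i : ℕ) + 1, by have := i.isLt; omega⟩ := by
  rw [ofList_append, map_mul, Equiv.Perm.mul_apply]
  have h1 : ofList (descWord i j).toList = descWord i j := rfl
  rw [h1, pihom_desc i j hj]
  exact pihom_fixlt hlt (by simp)

lemma pihom_all_le (t₀ : List (Fin m)) (i : Fin m) (j : ℕ)
    (hlt : ∀ a ∈ t₀, (a : ℕ) < (i : ℕ)) :
    ∀ a ∈ t₀ ++ (descWord i j).toList, (a : ℕ) < (i : ℕ) + 1 := by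
  intro a ha
  rcases List.mem_append.mp ha with h | h
  · have := hlt a h; omega
  · have := (descWord_letters i j a h).2; omega

lemma pihom_one_of_unobstructed (K : Type) [Field K] {s : FreeMonoid (Fin m)}
    (hs : ¬ Obstructed K s) (h : pihom s = 1) : s = 1 := by
  rcases runs K s.toList (by exact hs) with he | ⟨i, j, hj, s₀, heq, hlt⟩
  · exact FreeMonoid.toList.injective he
  · exfalso
    have him := i.isLt
    have happ := pihom_decomp s₀ i j hj hlt
    rw [← heq] at happ
    have : pihom (ofList s.toList) = 1 := h
    rw [this] at happ
    have : j = (i : ℕ) + 1 := by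
      have := congrArg Fin.val happ
      simpa using this
    omega

lemma inj_aux (K : Type) [Field K] : ∀ (L : ℕ) (t s : FreeMonoid (Fin m)),
    t.toList.length ≤ L → ¬ Obstructed K t → ¬ Obstructed K s →
    pihom t = pihom s → t = s := by
  intro L
  induction L with
  | zero =>
    intro t s hL ht hs hp
    have hnil : t.toList = [] := List.length_eq_zero_iff.mp (by omega)
    have ht1 : t = 1 := FreeMonoid.toList.injective hnil
    subst ht1
    rw [map_one] at hp
    exact (pihom_one_of_unobstructed K hs hp.symm).symm
  | succ L ih =>
    intro t s hL ht hs hp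
    rcases runs K t.toList (by exact ht) with he | ⟨i, j, hj, t₀, heq, hlt⟩
    · have ht1 : t = 1 := FreeMonoid.toList.injective he
      subst ht1
      rw [map_one] at hp
      exact (pihom_one_of_unobstructed K hs hp.symm).symm
    rcases runs K s.toList (by exact hs) with he' | ⟨i', j', hj', s₀, heq', hlt'⟩
    · have hs1 : s = 1 := FreeMonoid.toList.injective he'
      subst hs1
      rw [map_one] at hp
      exact pihom_one_of_unobstructed K ht hp
    have him := i.isLt
    have him' := i'.isLt
    -- the permutation
    have happt : pihom t ⟨j, by omega⟩ = ⟨(i : ℕ) + 1, by omega⟩ := by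
      have := pihom_decomp t₀ i j hj hlt
      rwa [← heq] at this
    have happs : pihom s ⟨j', by omega⟩ = ⟨(i' : ℕ) + 1, by omega⟩ := by
      have := pihom_decomp s₀ i' j' hj' hlt'
      rwa [← heq'] at this
    have hfixt : ∀ x : Fin (m + 1), (i : ℕ) + 1 < (x : ℕ) → pihom t x = x := by
      intro x hx
      have h1 : pihom (ofList t.toList) x = x := by
        rw [heq]
        exact pihom_fixlt (pihom_all_le t₀ i j hlt) hx
      exact h1
    have hfixs : ∀ x : Fin (m + 1), (i' : ℕ) + 1 < (x : ℕ) → pihom s x = x := by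
      intro x hx
      have h1 : pihom (ofList s.toList) x = x := by
        rw [heq']
        exact pihom_fixlt (pihom_all_le s₀ i' j' hlt') hx
      exact h1
    have hmovt : pihom t ⟨(i : ℕ) + 1, by omega⟩ ≠ ⟨(i : ℕ) + 1, by omega⟩ := by
      intro he
      have h2 := (pihom t).injective (happt.trans he.symm)
      have h3 := congrArg Fin.val h2
      simp at h3
      omega
    have hmovs : pihom s ⟨(i' : ℕ) + 1, by omega⟩ ≠ ⟨(i' : ℕ) + 1, by omega⟩ := by
      intro he
      have h2 := (pihom s).injective (happs.trans he.symm)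
      have h3 := congrArg Fin.val h2
      simp at h3
      omega
    have hpx : ∀ x, pihom t x = pihom s x := fun x => DFunLike.congr_fun hp x
    have hii' : (i : ℕ) = (i' : ℕ) := by
      rcases lt_trichotomy (i : ℕ) (i' : ℕ) with h | h | h
      · exact absurd ((hpx ⟨(i' : ℕ) + 1, by omega⟩).symm.trans
          (hfixt ⟨(i' : ℕ) + 1, by omega⟩ (by simp; omega))) hmovs
      · exact h
      · exact absurd ((hpx ⟨(i : ℕ) + 1, by omega⟩).trans
          (hfixs ⟨(i : ℕ) + 1, by omega⟩ (by simp; omega))) hmovt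
    have hieq : i = i' := Fin.ext hii'
    subst hieq
    have hjj' : j = j' := by
      have h1 : pihom t ⟨j', by omega⟩ = ⟨(i : ℕ) + 1, by omega⟩ :=
        (hpx _).trans happs
      have h2 := (pihom t).injective (happt.trans h1.symm)
      exact congrArg Fin.val h2
    subst hjj'
    have hdesc : pihom (ofList t₀) = pihom (ofList s₀) := by
      have h1 : pihom t = pihom (ofList t₀) * pihom (descWord i j) := by
        conv_lhs => rw [show t = ofList t.toList from rfl, heq, ofList_append, map_mul]
        rfl
      have h2 : pihom s = pihom (ofList s₀) * pihom (descWord i j) := by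
        conv_lhs => rw [show s = ofList s.toList from rfl, heq', ofList_append, map_mul]
        rfl
      rw [h1, h2] at hp
      exact mul_right_cancel hp
    have hlen : (descWord i j).toList.length = (i : ℕ) + 1 - j := descWord_length' i j
    have ht0l : t₀.length ≤ L := by
      have h4 := congrArg List.length heq
      simp only [List.length_append, hlen] at h4
      omega
    have ht0 : ¬ Obstructed K (ofList t₀) := by
      intro h
      apply ht
      have h5 := obstructed_factor (K := K) 1 (descWord i j) h
      rw [one_mul] at h5
      have h6 : t = ofList t₀ * descWord i j := by
        conv_lhs => rw [show t = ofList t.toList from rfl, heq, ofList_append]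
        rfl
      rw [h6]
      exact h5
    have hs0 : ¬ Obstructed K (ofList s₀) := by
      intro h
      apply hs
      have h5 := obstructed_factor (K := K) 1 (descWord i j) h
      rw [one_mul] at h5
      have h6 : s = ofList s₀ * descWord i j := by
        conv_lhs => rw [show s = ofList s.toList from rfl, heq', ofList_append]
        rfl
      rw [h6]
      exact h5
    have hts := ih (ofList t₀) (ofList s₀) ht0l ht0 hs0 hdesc
    have hts' : t₀ = s₀ := congrArg FreeMonoid.toList hts
    apply FreeMonoid.toList.injective
    rw [heq, heq', hts']

lemma pihom_injOn (K : Type) [Field K] {t s : FreeMonoid (Fin m)}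
    (ht : ¬ Obstructed K t) (hs : ¬ Obstructed K s) (hp : pihom t = pihom s) : t = s :=
  inj_aux K t.toList.length t s le_rfl ht hs hp

end E
end GSB

namespace GSB
open FreeMonoid
open scoped Classical
section F
variable {K : Type} [Field K] {m : ℕ}

lemma mono_mul (a b : FreeMonoid (Fin m)) :
    (mono a * mono b : FreeAlg K m) = mono (a * b) := by
  unfold mono
  rw [MonoidAlgebra.single_mul_single, one_mul]

lemma pair_diff (u v w1 w2 : FreeMonoid (Fin m)) :
    (mono u : FreeAlg K m) * (mono w1 - mono w2) * mono v
      = mono (u * w1 * v) - mono (u * w2 * v) := by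
  rw [mul_sub, sub_mul, mono_mul, mono_mul, mono_mul, mono_mul]

lemma mem_ideal_mul (u g v : FreeAlg K m) (hg : g ∈ coxeterGSB K m) :
    MemTwoSidedIdeal (coxeterGSB K m) (u * g * v) :=
  AddSubgroup.subset_closure ⟨u, g, v, hg, rfl⟩

lemma obstructed_step {t : FreeMonoid (Fin m)} (h : Obstructed K t) :
    ∃ t2, DegLexLT t2 t ∧
      MemTwoSidedIdeal (coxeterGSB K m) (mono t - mono t2 : FreeAlg K m) := by
  obtain ⟨g, hg, wg, hlw, u, v, rfl⟩ := h
  have hone : (mono (1 : FreeMonoid (Fin m)) : FreeAlg K m) = 1 := MonoidAlgebra.one_def.symm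
  rcases hg with ⟨i, rfl⟩ | ⟨i, j, hij, rfl⟩ | ⟨i, hi, j, hj, rfl⟩
  · have hwg : wg = of i * of i := isLeadingWord_unique hlw (lw1 i)
    subst hwg
    refine ⟨u * 1 * v, degLex_mul u v (dlt1 i), ?_⟩
    have hd := pair_diff (K := K) u v (of i * of i) 1
    rw [hone] at hd
    rw [← hd]
    exact mem_ideal_mul _ _ _ (Or.inl ⟨i, rfl⟩)
  · have hwg : wg = of i * of j := isLeadingWord_unique hlw (lw2 i j hij)
    subst hwg
    refine ⟨u * (of j * of i) * v, degLex_mul u v (dlt2 i j hij), ?_⟩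
    rw [← pair_diff]
    exact mem_ideal_mul _ _ _ (Or.inr (Or.inl ⟨i, j, hij, rfl⟩))
  · have hwg : wg = of ⟨(i : ℕ) + 1, hi⟩ * descWord i j * of ⟨(i : ℕ) + 1, hi⟩ :=
      isLeadingWord_unique hlw (lw3 i hi j)
    subst hwg
    refine ⟨u * (of i * of ⟨(i : ℕ) + 1, hi⟩ * descWord i j) * v,
      degLex_mul u v (dlt3 i hi j), ?_⟩
    rw [← pair_diff]
    exact mem_ideal_mul _ _ _ (Or.inr (Or.inr ⟨i, hi, j, hj, rfl⟩))

lemma reduce_base {t : FreeMonoid (Fin m)} (ho : ¬ Obstructed K t) :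
    ∃ r : FreeAlg K m, MemTwoSidedIdeal (coxeterGSB K m) (mono t - r) ∧
      (∀ x ∈ r.coeff.support, ¬ Obstructed K x ∧ encW x ≤ encW t) ∧
      (¬ Obstructed K t → r = mono t) := by
  refine ⟨mono t, by rw [sub_self]; exact AddSubgroup.zero_mem _, ?_, fun _ => rfl⟩
  intro x hx
  have hxt : x = t := by
    have h1 : x ∈ ({t} : Finset (FreeMonoid (Fin m))) := Finsupp.support_single_subset hx
    simpa using h1
  subst hxt
  exact ⟨ho, le_rfl⟩

lemma reduce (K : Type) [Field K] {m : ℕ} :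
    ∀ (N : ℕ) (t : FreeMonoid (Fin m)), encW t ≤ N →
    ∃ r : FreeAlg K m, MemTwoSidedIdeal (coxeterGSB K m) (mono t - r) ∧
      (∀ x ∈ r.coeff.support, ¬ Obstructed K x ∧ encW x ≤ encW t) ∧
      (¬ Obstructed K t → r = mono t) := by
  intro N
  induction N with
  | zero =>
    intro t hN
    by_cases ho : Obstructed K t
    · obtain ⟨t2, hlt, _⟩ := obstructed_step ho
      exact absurd (encW_lt_of_degLex hlt) (by omega)
    · exact reduce_base ho
  | succ N ih =>
    intro t hN
    by_cases ho : Obstructed K t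
    · obtain ⟨t2, hlt, hmem⟩ := obstructed_step ho
      have h2 := encW_lt_of_degLex hlt
      obtain ⟨r, hr1, hr2, _⟩ := ih t2 (by omega)
      refine ⟨r, ?_, ?_, fun hno => absurd ho hno⟩
      · have h3 := AddSubgroup.add_mem _ hmem hr1
        rwa [sub_add_sub_cancel] at h3
      · intro x hx
        obtain ⟨h3, h4⟩ := hr2 x hx
        exact ⟨h3, by omega⟩
    · exact reduce_base ho

lemma ideal_smul (c : K) {x : FreeAlg K m} (h : MemTwoSidedIdeal (coxeterGSB K m) x) :
    MemTwoSidedIdeal (coxeterGSB K m) (c • x) := by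
  refine AddSubgroup.closure_induction
    (p := fun y _ => MemTwoSidedIdeal (coxeterGSB K m) (c • y)) ?_ ?_ ?_ ?_ h
  · intro y hy
    obtain ⟨u, g, v, hg, rfl⟩ := hy
    show MemTwoSidedIdeal (coxeterGSB K m) (c • (u * g * v))
    have he : c • (u * g * v) = (c • u) * g * v := by
      rw [smul_mul_assoc, smul_mul_assoc]
    rw [he]
    exact mem_ideal_mul _ _ _ hg
  · show MemTwoSidedIdeal (coxeterGSB K m) (c • (0 : FreeAlg K m))
    rw [smul_zero]; exact AddSubgroup.zero_mem _
  · intro x y _ _ ihx ihy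
    show MemTwoSidedIdeal (coxeterGSB K m) (c • (x + y))
    rw [smul_add]; exact AddSubgroup.add_mem _ ihx ihy
  · intro x _ ihx
    show MemTwoSidedIdeal (coxeterGSB K m) (c • (-x))
    rw [smul_neg]; exact AddSubgroup.neg_mem _ ihx

lemma ideal_sum {s : Finset (FreeMonoid (Fin m))} {g : FreeMonoid (Fin m) → FreeAlg K m}
    (h : ∀ t ∈ s, MemTwoSidedIdeal (coxeterGSB K m) (g t)) :
    MemTwoSidedIdeal (coxeterGSB K m) (∑ t ∈ s, g t) :=
  AddSubgroup.sum_mem _ h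

lemma normalize (f : FreeAlg K m) : ∃ r : FreeAlg K m,
    MemTwoSidedIdeal (coxeterGSB K m) (f - r) ∧
    (∀ x ∈ r.coeff.support, ¬ Obstructed K x) ∧
    (∀ w, ¬ Obstructed K w → IsLeadingWord f w → r.coeff w = f.coeff w) := by
  choose R hR1 hR2 hR3 using fun t : FreeMonoid (Fin m) => reduce K (encW t) t le_rfl
  refine ⟨∑ t ∈ f.coeff.support, f.coeff t • R t, ?_, ?_, ?_⟩
  · have hf : f = ∑ t ∈ f.coeff.support, f.coeff t • (mono t : FreeAlg K m) := by
      have h1 : ∀ t ∈ f.coeff.support, f.coeff t • (mono t : FreeAlg K m) = MonoidAlgebra.single t (f.coeff t) := by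
        intro t _
        unfold mono
        rw [MonoidAlgebra.smul_single, smul_eq_mul, mul_one]
      rw [Finset.sum_congr rfl h1]
      exact (MonoidAlgebra.sum_coeff_single f).symm
    have h2 : f - ∑ t ∈ f.coeff.support, f.coeff t • R t
        = ∑ t ∈ f.coeff.support, f.coeff t • ((mono t : FreeAlg K m) - R t) := by
      nth_rewrite 1 [hf]
      rw [← Finset.sum_sub_distrib]
      exact Finset.sum_congr rfl (fun t _ => (smul_sub _ _ _).symm)
    rw [h2]
    exact ideal_sum (fun t _ => ideal_smul (f.coeff t) (hR1 t))
  · intro x hx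
    rw [MonoidAlgebra.coeff_sum] at hx
    have h1 := Finsupp.support_finset_sum (s := f.coeff.support)
      (f := fun t => (f.coeff t • R t).coeff) hx
    rw [Finset.mem_biUnion] at h1
    obtain ⟨t, _, hxt⟩ := h1
    rw [MonoidAlgebra.coeff_smul] at hxt
    have h2 : x ∈ (R t).coeff.support := Finsupp.support_smul hxt
    exact (hR2 t x h2).1
  · intro w hw hL
    rw [MonoidAlgebra.coeff_sum, Finsupp.finset_sum_apply]
    rw [Finset.sum_eq_single w]
    · rw [MonoidAlgebra.coeff_smul_apply, hR3 w hw, mono_apply, if_pos rfl, smul_eq_mul, mul_one]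
    · intro t ht htw
      rw [MonoidAlgebra.coeff_smul_apply]
      have h0 : (R t).coeff w = 0 := by
        by_contra h0
        have hw' : w ∈ (R t).coeff.support := Finsupp.mem_support_iff.mpr h0
        have h5 := (hR2 t w hw').2
        have h6 := encW_lt_of_degLex (hL.2 t ht htw)
        omega
      rw [h0, smul_zero]
    · intro hnw
      exact absurd hL.1 hnw

def Phi (K : Type) [Field K] (m : ℕ) :
    FreeAlg K m →+* MonoidAlgebra K (Equiv.Perm (Fin (m + 1))) :=
  MonoidAlgebra.mapDomainRingHom K (pihom (m := m))

lemma Phi_mono (w : FreeMonoid (Fin m)) :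
    Phi K m (mono w) = MonoidAlgebra.single (pihom w) 1 :=
  MonoidAlgebra.mapDomain_single

lemma Phi_gsb {g : FreeAlg K m} (hg : g ∈ coxeterGSB K m) : Phi K m g = 0 := by
  rcases hg with ⟨i, rfl⟩ | ⟨i, j, hij, rfl⟩ | ⟨i, hi, j, hj, rfl⟩
  · rw [map_sub, map_one, Phi_mono]
    rw [show pihom (of i * of i : FreeMonoid (Fin m)) = 1 by
      rw [map_mul, pihom_of]; exact sw_sq i]
    rw [show (MonoidAlgebra.single (1 : Equiv.Perm (Fin (m+1))) (1:K)) = 1 from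
      MonoidAlgebra.one_def.symm]
    exact sub_self 1
  · rw [map_sub, Phi_mono, Phi_mono]
    rw [show pihom (of i * of j : FreeMonoid (Fin m)) = pihom (of j * of i) by
      rw [map_mul, map_mul, pihom_of, pihom_of]
      exact (sw_commute (by omega)).symm]
    exact sub_self _
  · rw [map_sub, Phi_mono, Phi_mono, pihom_rel3 i hi j hj]
    exact sub_self _

lemma Phi_ideal {x : FreeAlg K m} (h : MemTwoSidedIdeal (coxeterGSB K m) x) :
    Phi K m x = 0 := by
  refine AddSubgroup.closure_induction (p := fun y _ => Phi K m y = 0) ?_ ?_ ?_ ?_ h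
  · intro y hy
    obtain ⟨u, g, v, hg, rfl⟩ := hy
    show Phi K m (u * g * v) = 0
    rw [map_mul, map_mul, Phi_gsb hg, mul_zero, zero_mul]
  · exact map_zero _
  · intro x y _ _ ihx ihy
    show Phi K m (x + y) = 0
    rw [map_add, ihx, ihy, add_zero]
  · intro x _ ihx
    show Phi K m (-x) = 0
    rw [map_neg, ihx, neg_zero]

lemma Phi_apply_lead (r : FreeAlg K m) (hs : ∀ x ∈ r.coeff.support, ¬ Obstructed K x)
    {w : FreeMonoid (Fin m)} (hw : ¬ Obstructed K w) :
    (Phi K m r).coeff (pihom w) = r.coeff w := by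
  show (Finsupp.mapDomain pihom r.coeff) (pihom w) = r.coeff w
  refine Finsupp.mapDomain_apply' {x | ¬ Obstructed K x} r.coeff ?_ ?_ hw
  · intro x hx
    exact hs x hx
  · intro x hx y hy hxy
    exact pihom_injOn K hx hy hxy

end F
end GSB

/-- The set of Coxeter relations of `S_n` listed in `coxeterGSB` is a
Gröbner–Shirshov basis for the defining ideal of the group algebra of `S_n`
with respect to the deg-lex order with `s₁ < s₂ < ⋯ < s_{n−1}`: the leading
word of any nonzero element of the ideal contains the leading word of one of
the basis elements as a factor. -/
theorem coxeterGSB_is_groebner_shirshov (K : Type) [Field K] (n : ℕ)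
    (f : FreeAlg K (n - 1)) (hf : MemTwoSidedIdeal (coxeterGSB K (n - 1)) f)
    (hf0 : f ≠ 0) :
    ∃ w, IsLeadingWord f w ∧
      ∃ g ∈ coxeterGSB K (n - 1), ∃ wg, IsLeadingWord g wg ∧
        ∃ u v : FreeMonoid (Fin (n - 1)), w = u * wg * v := by
  classical
  obtain ⟨w, hw⟩ := GSB.exists_isLeadingWord f hf0
  refine ⟨w, hw, ?_⟩
  by_cases hobs : GSB.Obstructed K w
  · obtain ⟨g, hg, wg, hlw, u, v, he⟩ := hobs
    exact ⟨g, hg, wg, hlw, u, v, he⟩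
  · exfalso
    obtain ⟨r, hrI, hrsupp, hrw⟩ := GSB.normalize f
    have hr_val : r.coeff w = f.coeff w := hrw w hobs hw
    have hfw : f.coeff w ≠ 0 := Finsupp.mem_support_iff.mp hw.1
    have hrI' : MemTwoSidedIdeal (coxeterGSB K (n - 1)) r := by
      have h2 : f - (f - r) ∈ AddSubgroup.closure
          {x : FreeAlg K (n-1) | ∃ u g v, g ∈ coxeterGSB K (n-1) ∧ x = u * g * v} :=
        AddSubgroup.sub_mem _ hf hrI
      rwa [sub_sub_cancel] at h2
    have h0 := GSB.Phi_ideal hrI'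
    have h1 := GSB.Phi_apply_lead r hrsupp hobs
    rw [h0] at h1
    rw [hr_val] at h1
    exact hfw (by rw [← h1]; rfl)


end
end

section
/- The positive braid monoid B_n⁺ is isomorphic to the monoid presented by generators {E_π : π ∈ S_n, π ≠ 1} subject to the relations E_π E_{τξ} = E_{πτ} E_ξ whenever π, τ, ξ ∈ S_n satisfy ℓ(πτξ) = ℓ(π) + ℓ(τ) + ℓ(ξ). -/
/-- The braid relations on the free monoid on `m` generators `σ₀, …, σ_{m−1}`:
`σᵢσⱼ = σⱼσᵢ` for `|i − j| > 1` and `σᵢσ_{i+1}σᵢ = σ_{i+1}σᵢσ_{i+1}`. -/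
def braidRel (m : ℕ) : FreeMonoid (Fin m) → FreeMonoid (Fin m) → Prop := fun x y =>
  (∃ i j : Fin m, ((i : ℕ) + 2 ≤ (j : ℕ) ∨ (j : ℕ) + 2 ≤ (i : ℕ)) ∧
    x = FreeMonoid.of i * FreeMonoid.of j ∧ y = FreeMonoid.of j * FreeMonoid.of i) ∨
  (∃ i j : Fin m, (j : ℕ) = (i : ℕ) + 1 ∧
    x = FreeMonoid.of i * FreeMonoid.of j * FreeMonoid.of i ∧
    y = FreeMonoid.of j * FreeMonoid.of i * FreeMonoid.of j)

/-- The positive braid monoid `B_n⁺` on `n` strands, with `n − 1` generators. -/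
abbrev BraidMonoidPos (n : ℕ) := (conGen (braidRel (n - 1))).Quotient

/-- The canonical projection from words to the positive braid monoid. -/
def braidMk (n : ℕ) : FreeMonoid (Fin (n - 1)) →* BraidMonoidPos n :=
  Con.mk' (conGen (braidRel (n - 1)))

/-- The Coxeter generator `sᵢ = (i, i+1)` of `S_n`, for `i : Fin (n-1)`. -/
def coxGen (n : ℕ) (i : Fin (n - 1)) : Equiv.Perm (Fin n) :=
  Equiv.swap ⟨(i : ℕ), by have := i.isLt; omega⟩ ⟨(i : ℕ) + 1, by have := i.isLt; omega⟩

/-- `l` is a reduced word for the permutation `π`: it expresses `π` and has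
minimal length among all such expressions. -/
def IsReducedWord (n : ℕ) (π : Equiv.Perm (Fin n)) (l : List (Fin (n - 1))) : Prop :=
  (l.map (coxGen n)).prod = π ∧
    ∀ l' : List (Fin (n - 1)), (l'.map (coxGen n)).prod = π → l.length ≤ l'.length


/-- The Coxeter length of a permutation: the minimal length of an expression
as a product of adjacent transpositions. -/
noncomputable def permLength (n : ℕ) (π : Equiv.Perm (Fin n)) : ℕ :=
  sInf {k | ∃ l : List (Fin (n - 1)), l.length = k ∧ (l.map (coxGen n)).prod = π}

/-- The generator word `E_π` in the free monoid on the nontrivial permutations;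
`E_1` is the empty word. -/
def permGenWord (n : ℕ) (π : Equiv.Perm (Fin n)) :
    FreeMonoid {π : Equiv.Perm (Fin n) // π ≠ 1} :=
  if h : π = 1 then 1 else FreeMonoid.of ⟨π, h⟩

/-- The defining relations `E_π E_{τξ} = E_{πτ} E_ξ` whenever
`ℓ(πτξ) = ℓ(π) + ℓ(τ) + ℓ(ξ)`. -/
def adjThurstonRel (n : ℕ) :
    FreeMonoid {π : Equiv.Perm (Fin n) // π ≠ 1} →
    FreeMonoid {π : Equiv.Perm (Fin n) // π ≠ 1} → Prop := fun x y =>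
  ∃ π τ ξ : Equiv.Perm (Fin n),
    permLength n (π * τ * ξ) = permLength n π + permLength n τ + permLength n ξ ∧
    x = permGenWord n π * permGenWord n (τ * ξ) ∧
    y = permGenWord n (π * τ) * permGenWord n ξ

namespace ATaux

open Equiv Finset


open Equiv Finset

variable {n : ℕ}

lemma swap_val (x y u : Fin n) (hxy : (y:ℕ) = x + 1) :
    ((Equiv.swap x y u : Fin n) : ℕ) = if (u:ℕ) = x then y else if (u:ℕ) = y then x else u := by
  rw [Equiv.swap_apply_def]
  split_ifs with h1 h2 h3 h4 h5 <;> simp_all [Fin.ext_iff]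

lemma swap_lt_swap_iff (x y u v : Fin n) (hxy : (y:ℕ) = x + 1) :
    Equiv.swap x y v < Equiv.swap x y u ↔
      ((v < u ∧ ¬(v = x ∧ u = y)) ∨ (u < v ∧ u = x ∧ v = y)) := by
  have h1 := swap_val x y u hxy
  have h2 := swap_val x y v hxy
  simp only [Fin.lt_iff_val_lt_val, Fin.ext_iff] at *
  constructor
  · intro h; split_ifs at h1 h2 <;> omega
  · intro h; split_ifs at h1 h2 <;> omega

/-- inversion set -/
def invSet (π : Equiv.Perm (Fin n)) : Finset (Fin n × Fin n) :=
  Finset.univ.filter fun p => p.1 < p.2 ∧ π p.2 < π p.1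

noncomputable def invCount (π : Equiv.Perm (Fin n)) : ℕ := (invSet π).card

lemma mem_invSet {π : Equiv.Perm (Fin n)} {p : Fin n × Fin n} :
    p ∈ invSet π ↔ p.1 < p.2 ∧ π p.2 < π p.1 := by simp [invSet]

@[simp] lemma invCount_one : invCount (1 : Equiv.Perm (Fin n)) = 0 := by
  simp only [invCount, Finset.card_eq_zero, invSet, Finset.filter_eq_empty_iff]
  intro p _
  simp only [Equiv.Perm.one_apply]
  rintro ⟨h1, h2⟩
  exact absurd h1 (not_lt.2 h2.le)

lemma invSet_swap_mul_pos {π : Equiv.Perm (Fin n)} {x y : Fin n} (hxy : (y:ℕ) = x + 1)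
    (h : π⁻¹ x < π⁻¹ y) :
    invSet (Equiv.swap x y * π) = insert (π⁻¹ x, π⁻¹ y) (invSet π) := by
  ext ⟨a, b⟩
  simp only [mem_invSet, Finset.mem_insert, Prod.mk.injEq, Equiv.Perm.mul_apply]
  rw [swap_lt_swap_iff x y (π a) (π b) hxy]
  constructor
  · rintro ⟨hab, (⟨h1, h2⟩ | ⟨h1, h2, h3⟩)⟩
    · exact Or.inr ⟨hab, h1⟩
    · left
      constructor
      · rw [← h2]; simp
      · rw [← h3]; simp
  · rintro (⟨rfl, rfl⟩ | ⟨hab, hinv⟩)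
    · refine ⟨h, Or.inr ⟨?_, by simp, by simp⟩⟩
      simp only [Equiv.Perm.coe_inv, Equiv.apply_symm_apply]
      exact Fin.lt_iff_val_lt_val.2 (by omega)
    · refine ⟨hab, Or.inl ⟨hinv, ?_⟩⟩
      rintro ⟨hbx, hay⟩
      -- then a = π⁻¹ y, b = π⁻¹ x, so π⁻¹ y < π⁻¹ x, contradiction with h
      have ha : a = π⁻¹ y := by rw [← hay]; simp
      have hb : b = π⁻¹ x := by rw [← hbx]; simp
      rw [ha, hb] at hab
      exact absurd h (not_lt.2 hab.le)

lemma invSet_swap_mul_neg {π : Equiv.Perm (Fin n)} {x y : Fin n} (hxy : (y:ℕ) = x + 1)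
    (h : π⁻¹ y < π⁻¹ x) :
    invSet π = insert (π⁻¹ y, π⁻¹ x) (invSet (Equiv.swap x y * π)) := by
  have key := invSet_swap_mul_pos (π := Equiv.swap x y * π) (x := x) (y := y) hxy ?pre
  case pre =>
    simpa [Equiv.Perm.mul_apply, mul_inv_rev] using h
  have hswap : Equiv.swap x y * (Equiv.swap x y * π) = π := by
    rw [← mul_assoc, Equiv.swap_mul_self, one_mul]
  rw [hswap] at key
  rw [key]
  congr 1
  simp [mul_inv_rev, Equiv.Perm.mul_apply]

lemma notmem_pos {π : Equiv.Perm (Fin n)} {x y : Fin n} (hxy : (y:ℕ) = x + 1) :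
    (π⁻¹ x, π⁻¹ y) ∉ invSet π := by
  simp only [mem_invSet, Equiv.Perm.coe_inv, Equiv.apply_symm_apply, not_and]
  intro _
  exact not_lt.2 (Fin.le_def.2 (by omega))

lemma invCount_swap_mul_pos {π : Equiv.Perm (Fin n)} {x y : Fin n} (hxy : (y:ℕ) = x + 1)
    (h : π⁻¹ x < π⁻¹ y) :
    invCount (Equiv.swap x y * π) = invCount π + 1 := by
  rw [invCount, invSet_swap_mul_pos hxy h, Finset.card_insert_of_notMem (notmem_pos hxy),
    invCount]

lemma invCount_swap_mul_neg {π : Equiv.Perm (Fin n)} {x y : Fin n} (hxy : (y:ℕ) = x + 1)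
    (h : π⁻¹ y < π⁻¹ x) :
    invCount π = invCount (Equiv.swap x y * π) + 1 := by
  have h2 : (Equiv.swap x y * π)⁻¹ x < (Equiv.swap x y * π)⁻¹ y := by
    simpa [Equiv.Perm.mul_apply, mul_inv_rev] using h
  have := invCount_swap_mul_pos (π := Equiv.swap x y * π) hxy h2
  rw [← mul_assoc, Equiv.swap_mul_self, one_mul] at this
  omega


section Words

variable {n : ℕ}

def aI (i : Fin (n-1)) : Fin n := ⟨(i:ℕ), by have := i.isLt; omega⟩
def bI (i : Fin (n-1)) : Fin n := ⟨(i:ℕ)+1, by have := i.isLt; omega⟩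

lemma coxGen_eq (i : Fin (n-1)) : coxGen n i = Equiv.swap (aI i) (bI i) := rfl

lemma bI_val (i : Fin (n-1)) : ((bI i) : ℕ) = ((aI i) : ℕ) + 1 := rfl

lemma aI_ne_bI (i : Fin (n-1)) : aI i ≠ bI i := by
  simp [aI, bI, Fin.ext_iff]

lemma inv_ne (π : Equiv.Perm (Fin n)) (i : Fin (n-1)) : π⁻¹ (aI i) ≠ π⁻¹ (bI i) :=
  fun h => aI_ne_bI i (π⁻¹.injective h)

lemma invCount_coxGen_mul_pos {π : Equiv.Perm (Fin n)} {i : Fin (n-1)}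
    (h : π⁻¹ (aI i) < π⁻¹ (bI i)) :
    invCount (coxGen n i * π) = invCount π + 1 := by
  rw [coxGen_eq]; exact invCount_swap_mul_pos (bI_val i) h

lemma invCount_coxGen_mul_neg {π : Equiv.Perm (Fin n)} {i : Fin (n-1)}
    (h : π⁻¹ (bI i) < π⁻¹ (aI i)) :
    invCount π = invCount (coxGen n i * π) + 1 := by
  rw [coxGen_eq]; exact invCount_swap_mul_neg (bI_val i) h

/-- word product -/
abbrev wp (l : List (Fin (n-1))) : Equiv.Perm (Fin n) := (l.map (coxGen n)).prod

lemma invCount_wp_le (l : List (Fin (n-1))) : invCount (wp l) ≤ l.length := by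
  induction l with
  | nil => simp [wp]
  | cons i l ih =>
    have hw : wp (i :: l) = coxGen n i * wp l := by simp [wp]
    rw [hw]
    rcases (inv_ne (wp l) i).lt_or_gt with h | h
    · rw [invCount_coxGen_mul_pos h]; simpa using ih
    · have := invCount_coxGen_mul_neg h
      simp only [List.length_cons]
      omega

lemma eq_one_of_no_descent {π : Equiv.Perm (Fin n)}
    (h : ∀ i : Fin (n-1), π⁻¹ (aI i) < π⁻¹ (bI i)) : π = 1 := by
  have hmono : ∀ d : ℕ, ∀ x y : Fin n, (y:ℕ) = (x:ℕ) + d + 1 → π⁻¹ x < π⁻¹ y := by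
    intro d
    induction d with
    | zero =>
      intro x y hxy
      have hi : (x:ℕ) < n - 1 := by have := y.isLt; omega
      have hax : aI ⟨(x:ℕ), hi⟩ = x := by simp [aI]
      have hbx : bI ⟨(x:ℕ), hi⟩ = y := by simp [bI, Fin.ext_iff]; omega
      have := h ⟨(x:ℕ), hi⟩
      rwa [hax, hbx] at this
    | succ d ih =>
      intro x y hxy
      have hz : (x:ℕ) + d + 1 < n := by have := y.isLt; omega
      have h1 := ih x ⟨(x:ℕ) + d + 1, hz⟩ (by simp)
      have hi : (x:ℕ) + d + 1 < n - 1 := by have := y.isLt; omega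
      have h2 := h ⟨(x:ℕ) + d + 1, by omega⟩
      have hax : aI (⟨(x:ℕ) + d + 1, by omega⟩ : Fin (n-1)) = ⟨(x:ℕ) + d + 1, hz⟩ := by
        simp [aI]
      have hbx : bI (⟨(x:ℕ) + d + 1, by omega⟩ : Fin (n-1)) = y := by
        simp [bI, Fin.ext_iff]; omega
      rw [hax, hbx] at h2
      exact h1.trans h2
  have hsm : StrictMono (fun x => π⁻¹ x : Fin n → Fin n) := by
    intro x y hxy
    have : (y:ℕ) = (x:ℕ) + ((y:ℕ) - (x:ℕ) - 1) + 1 := by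
      have := Fin.lt_iff_val_lt_val.1 hxy; omega
    exact hmono _ x y this
  have hid : (fun x => π⁻¹ x : Fin n → Fin n) = id := by
    haveI : WellFoundedLT (Fin n) := inferInstance
    apply (hsm.range_inj (strictMono_id : StrictMono (id : Fin n → Fin n))).1
    simp [Set.range_id, Equiv.range_eq_univ]
  apply Equiv.ext
  intro x
  have : π⁻¹ (π x) = π x := congrFun hid (π x)
  simpa using this.symm

lemma exists_descent {π : Equiv.Perm (Fin n)} (h : π ≠ 1) :
    ∃ i : Fin (n-1), π⁻¹ (bI i) < π⁻¹ (aI i) := by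
  by_contra hc
  push_neg at hc
  exact h (eq_one_of_no_descent fun i => ((inv_ne π i).lt_or_gt).resolve_right
    (not_lt.2 (hc i)))

lemma exists_word_aux : ∀ k : ℕ, ∀ π : Equiv.Perm (Fin n), invCount π = k →
    ∃ l : List (Fin (n-1)), wp l = π ∧ l.length = invCount π := by
  intro k
  induction k using Nat.strong_induction_on with
  | _ k ih =>
    intro π hk
    by_cases h1 : π = 1
    · exact ⟨[], by simp [wp, h1]⟩
    · obtain ⟨i, hi⟩ := exists_descent h1
      have hcount := invCount_coxGen_mul_neg hi
      obtain ⟨l, hl, hlen⟩ := ih (invCount (coxGen n i * π)) (by omega) _ rfl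
      refine ⟨i :: l, ?_, by simp [hlen]; omega⟩
      have : wp (i :: l) = coxGen n i * wp l := by simp [wp]
      rw [this, hl, ← mul_assoc, coxGen_eq, Equiv.swap_mul_self, one_mul]

lemma exists_word (π : Equiv.Perm (Fin n)) :
    ∃ l : List (Fin (n-1)), wp l = π ∧ l.length = invCount π :=
  exists_word_aux _ π rfl

lemma permLength_eq_invCount (π : Equiv.Perm (Fin n)) : permLength n π = invCount π := by
  obtain ⟨l, hl, hlen⟩ := exists_word π
  apply le_antisymm
  · exact csInf_le (OrderBot.bddBelow _) ⟨l, hlen, hl⟩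
  · have hne : {k | ∃ l : List (Fin (n-1)), l.length = k ∧ wp l = π}.Nonempty :=
      ⟨l.length, l, rfl, hl⟩
    obtain ⟨l', hlen', hl'⟩ := csInf_mem hne
    rw [permLength, ← hlen', ← hl']
    exact invCount_wp_le l'

end Words

section Reduced

variable {n : ℕ}

lemma invCount_eq_zero_iff {π : Equiv.Perm (Fin n)} : invCount π = 0 ↔ π = 1 := by
  constructor
  · intro h
    by_contra h1
    obtain ⟨i, hi⟩ := exists_descent h1
    have hmem : (π⁻¹ (bI i), π⁻¹ (aI i)) ∈ invSet π := by
      rw [mem_invSet]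
      refine ⟨hi, ?_⟩
      simp only [Equiv.Perm.coe_inv, Equiv.apply_symm_apply]
      exact Fin.lt_iff_val_lt_val.2 (by rw [bI_val]; omega)
    rw [invCount, Finset.card_eq_zero] at h
    simp [h] at hmem
  · rintro rfl; simp

lemma permLength_one : permLength n (1 : Equiv.Perm (Fin n)) = 0 := by
  simp [permLength_eq_invCount]

lemma permLength_eq_zero_iff {π : Equiv.Perm (Fin n)} : permLength n π = 0 ↔ π = 1 := by
  rw [permLength_eq_invCount, invCount_eq_zero_iff]

lemma coxGen_mul_self (i : Fin (n-1)) : coxGen n i * coxGen n i = 1 := by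
  rw [coxGen_eq, Equiv.swap_mul_self]

lemma permLength_coxGen (i : Fin (n-1)) : permLength n (coxGen n i) = 1 := by
  rw [permLength_eq_invCount]
  have h : ((1 : Equiv.Perm (Fin n)))⁻¹ (aI i) < (1 : Equiv.Perm (Fin n))⁻¹ (bI i) := by
    simp only [inv_one, Equiv.Perm.one_apply]
    exact Fin.lt_iff_val_lt_val.2 (by rw [bI_val]; omega)
  have := invCount_coxGen_mul_pos h
  rwa [mul_one, invCount_one] at this

lemma isReducedWord_iff {π : Equiv.Perm (Fin n)} {l : List (Fin (n-1))} :
    IsReducedWord n π l ↔ wp l = π ∧ l.length = permLength n π := by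
  obtain ⟨l₀, hl₀, hlen₀⟩ := exists_word π
  constructor
  · rintro ⟨hprod, hmin⟩
    refine ⟨hprod, le_antisymm ?_ ?_⟩
    · rw [permLength_eq_invCount, ← hlen₀]
      exact hmin l₀ hl₀
    · rw [permLength_eq_invCount, ← hprod]
      exact invCount_wp_le l
  · rintro ⟨hprod, hlen⟩
    refine ⟨hprod, fun l' hl' => ?_⟩
    rw [hlen, permLength_eq_invCount, ← hl']
    exact invCount_wp_le l'

lemma exists_isReducedWord (π : Equiv.Perm (Fin n)) : ∃ l, IsReducedWord n π l := by
  obtain ⟨l, hl, hlen⟩ := exists_word π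
  exact ⟨l, isReducedWord_iff.2 ⟨hl, by rw [hlen, permLength_eq_invCount]⟩⟩

lemma permLength_descent {π : Equiv.Perm (Fin n)} {i : Fin (n-1)}
    (h : π⁻¹ (bI i) < π⁻¹ (aI i)) :
    permLength n (coxGen n i * π) + 1 = permLength n π := by
  rw [permLength_eq_invCount, permLength_eq_invCount]
  exact (invCount_coxGen_mul_neg h).symm

lemma permLength_ascent {π : Equiv.Perm (Fin n)} {i : Fin (n-1)}
    (h : π⁻¹ (aI i) < π⁻¹ (bI i)) :
    permLength n (coxGen n i * π) = permLength n π + 1 := by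
  rw [permLength_eq_invCount, permLength_eq_invCount]
  exact invCount_coxGen_mul_pos h

lemma reduced_cons {π : Equiv.Perm (Fin n)} {i : Fin (n-1)} {u : List (Fin (n-1))}
    (h : IsReducedWord n π (i :: u)) :
    IsReducedWord n (coxGen n i * π) u ∧ π⁻¹ (bI i) < π⁻¹ (aI i) := by
  rw [isReducedWord_iff] at h
  obtain ⟨hprod, hlen⟩ := h
  have hwpu : wp u = coxGen n i * π := by
    have : wp (i :: u) = coxGen n i * wp u := by simp [wp]
    rw [this] at hprod
    rw [← hprod, ← mul_assoc, coxGen_mul_self, one_mul]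
  have hle : invCount (coxGen n i * π) ≤ u.length := hwpu ▸ invCount_wp_le u
  simp only [List.length_cons] at hlen
  have hdesc : π⁻¹ (bI i) < π⁻¹ (aI i) := by
    rcases (inv_ne π i).lt_or_gt with hc | hc
    · exfalso
      have := invCount_coxGen_mul_pos hc
      rw [permLength_eq_invCount] at hlen
      omega
    · exact hc
  have hcount := invCount_coxGen_mul_neg hdesc
  rw [permLength_eq_invCount] at hlen
  refine ⟨isReducedWord_iff.2 ⟨hwpu, ?_⟩, hdesc⟩
  rw [permLength_eq_invCount]
  omega

lemma descent_extend {π : Equiv.Perm (Fin n)} {i : Fin (n-1)} {w : List (Fin (n-1))}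
    (hd : π⁻¹ (bI i) < π⁻¹ (aI i)) (hw : IsReducedWord n (coxGen n i * π) w) :
    IsReducedWord n π (i :: w) := by
  rw [isReducedWord_iff] at hw ⊢
  obtain ⟨hprod, hlen⟩ := hw
  constructor
  · have : wp (i :: w) = coxGen n i * wp w := by simp [wp]
    rw [this, hprod, ← mul_assoc, coxGen_mul_self, one_mul]
  · have := permLength_descent hd
    simp only [List.length_cons]
    omega

lemma permLength_le_add {α β : Equiv.Perm (Fin n)} :
    permLength n (α * β) ≤ permLength n α + permLength n β := by
  obtain ⟨u, hu⟩ := exists_isReducedWord (n := n) α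
  obtain ⟨v, hv⟩ := exists_isReducedWord (n := n) β
  rw [isReducedWord_iff] at hu hv
  have hw : wp (u ++ v) = α * β := by
    have : wp (u ++ v) = wp u * wp v := by simp [wp]
    rw [this, hu.1, hv.1]
  calc permLength n (α * β) = invCount (α * β) := permLength_eq_invCount _
    _ ≤ (u ++ v).length := hw ▸ invCount_wp_le (u ++ v)
    _ = permLength n α + permLength n β := by simp [hu.2, hv.2]

lemma reduced_append {α β : Equiv.Perm (Fin n)} {u v : List (Fin (n-1))}
    (hadd : permLength n (α * β) = permLength n α + permLength n β)
    (hu : IsReducedWord n α u) (hv : IsReducedWord n β v) :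
    IsReducedWord n (α * β) (u ++ v) := by
  rw [isReducedWord_iff] at hu hv ⊢
  constructor
  · have : wp (u ++ v) = wp u * wp v := by simp [wp]
    rw [this, hu.1, hv.1]
  · simp [hu.2, hv.2, hadd]

lemma coxGen_comm {i j : Fin (n-1)} (h : (i:ℕ) + 2 ≤ (j:ℕ) ∨ (j:ℕ) + 2 ≤ (i:ℕ)) :
    coxGen n i * coxGen n j = coxGen n j * coxGen n i := by
  rw [coxGen_eq, coxGen_eq]
  have h1 : Equiv.swap (aI i) (bI i) (aI j) = aI j :=
    Equiv.swap_apply_of_ne_of_ne (by simp [aI, bI, Fin.ext_iff]; omega)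
      (by simp [aI, bI, Fin.ext_iff]; omega)
  have h2 : Equiv.swap (aI i) (bI i) (bI j) = bI j :=
    Equiv.swap_apply_of_ne_of_ne (by simp [aI, bI, Fin.ext_iff]; omega)
      (by simp [aI, bI, Fin.ext_iff]; omega)
  have key : Equiv.swap (aI j) (bI j) =
      Equiv.swap (aI i) (bI i) * Equiv.swap (aI j) (bI j) * (Equiv.swap (aI i) (bI i))⁻¹ := by
    rw [← Equiv.swap_apply_apply, h1, h2]
  calc Equiv.swap (aI i) (bI i) * Equiv.swap (aI j) (bI j)
      = (Equiv.swap (aI i) (bI i) * Equiv.swap (aI j) (bI j) *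
          (Equiv.swap (aI i) (bI i))⁻¹) * Equiv.swap (aI i) (bI i) := by
        group
    _ = Equiv.swap (aI j) (bI j) * Equiv.swap (aI i) (bI i) := by rw [← key]

lemma coxGen_braid {i j : Fin (n-1)} (h : (j:ℕ) = (i:ℕ) + 1) :
    coxGen n i * coxGen n j * coxGen n i = coxGen n j * coxGen n i * coxGen n j := by
  have hba : bI i = aI j := by simp [aI, bI, Fin.ext_iff]; omega
  set x := aI i
  set y := bI i
  set z := bI j
  have hxy : x ≠ y := aI_ne_bI i
  have hyz : y ≠ z := by rw [hba]; exact aI_ne_bI j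
  have hxz : x ≠ z := by simp [x, z, aI, bI, Fin.ext_iff]; omega
  have e1 : coxGen n i = Equiv.swap x y := rfl
  have e2 : coxGen n j = Equiv.swap y z := by rw [coxGen_eq, hba]
  rw [e1, e2]
  have lhs : Equiv.swap x y * Equiv.swap y z * Equiv.swap x y = Equiv.swap x z := by
    have h1 : Equiv.swap x y * Equiv.swap y z * (Equiv.swap x y)⁻¹ = Equiv.swap x z := by
      rw [← Equiv.swap_apply_apply, Equiv.swap_apply_right,
        Equiv.swap_apply_of_ne_of_ne (Ne.symm hxz) (Ne.symm hyz)]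
    rwa [Equiv.swap_inv] at h1
  have rhs : Equiv.swap y z * Equiv.swap x y * Equiv.swap y z = Equiv.swap x z := by
    have h2 : Equiv.swap y z * Equiv.swap x y * (Equiv.swap y z)⁻¹ = Equiv.swap x z := by
      rw [← Equiv.swap_apply_apply, Equiv.swap_apply_of_ne_of_ne hxy hxz,
        Equiv.swap_apply_left]
    rwa [Equiv.swap_inv] at h2
  rw [lhs, rhs]

end Reduced

section Matsumoto

variable {n : ℕ}

lemma coxGen_inv (i : Fin (n-1)) : (coxGen n i)⁻¹ = coxGen n i := by
  rw [coxGen_eq, Equiv.swap_inv]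

lemma inv_coxGen_mul (π : Equiv.Perm (Fin n)) (i : Fin (n-1)) (x : Fin n) :
    (coxGen n i * π)⁻¹ x = π⁻¹ (coxGen n i x) := by
  rw [mul_inv_rev, Equiv.Perm.mul_apply, coxGen_inv]

lemma coxGen_fix {i : Fin (n-1)} {x : Fin n} (h1 : (x:ℕ) ≠ (i:ℕ)) (h2 : (x:ℕ) ≠ (i:ℕ)+1) :
    coxGen n i x = x := by
  rw [coxGen_eq]
  exact Equiv.swap_apply_of_ne_of_ne (by simp [aI, Fin.ext_iff]; omega)
    (by simp [bI, Fin.ext_iff]; omega)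

lemma coxGen_aI (i : Fin (n-1)) : coxGen n i (aI i) = bI i := by
  rw [coxGen_eq]; exact Equiv.swap_apply_left _ _

lemma coxGen_bI (i : Fin (n-1)) : coxGen n i (bI i) = aI i := by
  rw [coxGen_eq]; exact Equiv.swap_apply_right _ _

lemma bI_eq_aI {i j : Fin (n-1)} (h : (j:ℕ) = (i:ℕ)+1) : bI i = aI j := by
  simp [aI, bI, Fin.ext_iff, h]

/-- D1 -/
lemma descent_comm {π : Equiv.Perm (Fin n)} {i j : Fin (n-1)}
    (hij : (i:ℕ) + 2 ≤ (j:ℕ) ∨ (j:ℕ) + 2 ≤ (i:ℕ))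
    (hdj : π⁻¹ (bI j) < π⁻¹ (aI j)) :
    (coxGen n i * π)⁻¹ (bI j) < (coxGen n i * π)⁻¹ (aI j) := by
  rw [inv_coxGen_mul, inv_coxGen_mul,
    coxGen_fix (x := bI j) (by simp [bI]; omega) (by simp [bI]; omega),
    coxGen_fix (x := aI j) (by simp [aI]; omega) (by simp [aI]; omega)]
  exact hdj

/-- D2a -/
lemma descent_braid_a {π : Equiv.Perm (Fin n)} {i j : Fin (n-1)} (hji : (j:ℕ) = (i:ℕ)+1)
    (hdi : π⁻¹ (bI i) < π⁻¹ (aI i)) (hdj : π⁻¹ (bI j) < π⁻¹ (aI j)) :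
    (coxGen n i * π)⁻¹ (bI j) < (coxGen n i * π)⁻¹ (aI j) := by
  rw [inv_coxGen_mul, inv_coxGen_mul,
    coxGen_fix (x := bI j) (by simp [bI]; omega) (by simp [bI]; omega),
    ← bI_eq_aI hji, coxGen_bI]
  calc π⁻¹ (bI j) < π⁻¹ (aI j) := hdj
    _ = π⁻¹ (bI i) := by rw [bI_eq_aI hji]
    _ < π⁻¹ (aI i) := hdi

/-- D2b -/
lemma descent_braid_b {π : Equiv.Perm (Fin n)} {i j : Fin (n-1)} (hji : (j:ℕ) = (i:ℕ)+1)
    (hdj : π⁻¹ (bI j) < π⁻¹ (aI j)) :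
    (coxGen n j * (coxGen n i * π))⁻¹ (bI i) < (coxGen n j * (coxGen n i * π))⁻¹ (aI i) := by
  rw [inv_coxGen_mul, inv_coxGen_mul, inv_coxGen_mul, inv_coxGen_mul]
  rw [show coxGen n j (bI i) = bI j by rw [bI_eq_aI hji, coxGen_aI],
    coxGen_fix (x := bI j) (by simp [bI]; omega) (by simp [bI]; omega),
    coxGen_fix (x := aI i) (i := j) (by simp [aI]; omega) (by simp [aI]; omega),
    coxGen_aI, bI_eq_aI hji]
  exact hdj

/-- D2a' -/
lemma descent_braid_a' {π : Equiv.Perm (Fin n)} {i j : Fin (n-1)} (hji : (j:ℕ) = (i:ℕ)+1)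
    (hdi : π⁻¹ (bI i) < π⁻¹ (aI i)) (hdj : π⁻¹ (bI j) < π⁻¹ (aI j)) :
    (coxGen n j * π)⁻¹ (bI i) < (coxGen n j * π)⁻¹ (aI i) := by
  rw [inv_coxGen_mul, inv_coxGen_mul,
    show coxGen n j (bI i) = bI j by rw [bI_eq_aI hji, coxGen_aI],
    coxGen_fix (x := aI i) (i := j) (by simp [aI]; omega) (by simp [aI]; omega)]
  calc π⁻¹ (bI j) < π⁻¹ (aI j) := hdj
    _ = π⁻¹ (bI i) := by rw [bI_eq_aI hji]
    _ < π⁻¹ (aI i) := hdi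

/-- D2b' -/
lemma descent_braid_b' {π : Equiv.Perm (Fin n)} {i j : Fin (n-1)} (hji : (j:ℕ) = (i:ℕ)+1)
    (hdi : π⁻¹ (bI i) < π⁻¹ (aI i)) :
    (coxGen n i * (coxGen n j * π))⁻¹ (bI j) < (coxGen n i * (coxGen n j * π))⁻¹ (aI j) := by
  rw [inv_coxGen_mul, inv_coxGen_mul, inv_coxGen_mul, inv_coxGen_mul]
  rw [coxGen_fix (x := bI j) (i := i) (by simp [bI]; omega) (by simp [bI]; omega),
    show coxGen n j (bI j) = aI j from coxGen_bI j, ← bI_eq_aI hji, coxGen_bI,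
    coxGen_fix (x := aI i) (i := j) (by simp [aI]; omega) (by simp [aI]; omega)]
  exact hdi

/-- braid-equivalence of words -/
def RR (l l' : List (Fin (n-1))) : Prop :=
  conGen (braidRel (n-1)) (FreeMonoid.ofList l) (FreeMonoid.ofList l')

lemma RR.refl (l : List (Fin (n-1))) : RR l l := (conGen _).refl _

lemma RR.symm' {l l' : List (Fin (n-1))} (h : RR l l') : RR l' l := (conGen _).symm h

lemma RR.trans' {l₁ l₂ l₃ : List (Fin (n-1))} (h1 : RR l₁ l₂) (h2 : RR l₂ l₃) : RR l₁ l₃ :=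
  (conGen _).trans h1 h2

lemma ofList_cons (i : Fin (n-1)) (u : List (Fin (n-1))) :
    (FreeMonoid.ofList (i :: u) : FreeMonoid (Fin (n-1))) =
      FreeMonoid.of i * FreeMonoid.ofList u := rfl

lemma RR.cons {u v : List (Fin (n-1))} (i : Fin (n-1)) (h : RR u v) : RR (i :: u) (i :: v) := by
  exact (conGen (braidRel (n-1))).mul ((conGen (braidRel (n-1))).refl (FreeMonoid.of i)) h

lemma RR.comm_front {i j : Fin (n-1)} (hij : (i:ℕ) + 2 ≤ (j:ℕ) ∨ (j:ℕ) + 2 ≤ (i:ℕ))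
    (w : List (Fin (n-1))) : RR (i :: j :: w) (j :: i :: w) := by
  have hbase : conGen (braidRel (n-1)) (FreeMonoid.of i * FreeMonoid.of j)
      (FreeMonoid.of j * FreeMonoid.of i) :=
    ConGen.Rel.of _ _ (Or.inl ⟨i, j, hij, rfl, rfl⟩)
  exact (conGen (braidRel (n-1))).mul hbase
    ((conGen (braidRel (n-1))).refl (FreeMonoid.ofList w))

lemma RR.braid_front {i j : Fin (n-1)} (hji : (j:ℕ) = (i:ℕ) + 1)
    (w : List (Fin (n-1))) : RR (i :: j :: i :: w) (j :: i :: j :: w) := by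
  have hbase : conGen (braidRel (n-1))
      (FreeMonoid.of i * FreeMonoid.of j * FreeMonoid.of i)
      (FreeMonoid.of j * FreeMonoid.of i * FreeMonoid.of j) :=
    ConGen.Rel.of _ _ (Or.inr ⟨i, j, hji, rfl, rfl⟩)
  exact (conGen (braidRel (n-1))).mul hbase
    ((conGen (braidRel (n-1))).refl (FreeMonoid.ofList w))

theorem matsumoto_aux : ∀ k : ℕ, ∀ (π : Equiv.Perm (Fin n)) (l l' : List (Fin (n-1))),
    l.length ≤ k → IsReducedWord n π l → IsReducedWord n π l' → RR l l' := by
  intro k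
  induction k using Nat.strong_induction_on with
  | _ k ih =>
    intro π l l' hk hl hl'
    have hlen : l.length = permLength n π := (isReducedWord_iff.1 hl).2
    have hlen' : l'.length = permLength n π := (isReducedWord_iff.1 hl').2
    match l, l' with
    | [], l' =>
      have : l'.length = 0 := by rw [hlen']; simpa using hlen.symm
      rw [List.length_eq_zero_iff] at this
      subst this
      exact RR.refl []
    | i :: u, [] =>
      exfalso
      simp only [List.length_cons, List.length_nil] at hlen hlen'
      omega
    | i :: u, j :: v =>
      obtain ⟨hu, hdi⟩ := reduced_cons hl
      obtain ⟨hv, hdj⟩ := reduced_cons hl'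
      have hulen : u.length = permLength n π - 1 := by
        simp only [List.length_cons] at hlen; omega
      have hkpos : 1 ≤ k := by
        simp only [List.length_cons] at hk; omega
      by_cases hijeq : i = j
      · subst hijeq
        exact RR.cons i (ih (k-1) (by omega) _ u v
          (by simp only [List.length_cons] at hk; omega) hu
          ((reduced_cons hl').1))
      -- the braid case as a reusable block
      · have braidcase : ∀ (π : Equiv.Perm (Fin n)) (i j : Fin (n-1))
            (u v : List (Fin (n-1))), (j:ℕ) = (i:ℕ) + 1 →
            (i :: u).length ≤ k → IsReducedWord n π (i :: u) → IsReducedWord n π (j :: v) →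
            RR (i :: u) (j :: v) := by
          intro π i j u v hji hku hlu hlv
          obtain ⟨hu, hdi⟩ := reduced_cons hlu
          obtain ⟨hv, hdj⟩ := reduced_cons hlv
          -- w : reduced word for coxGen i * coxGen j * coxGen i * π
          obtain ⟨w, hw⟩ := exists_isReducedWord
            (coxGen n i * (coxGen n j * (coxGen n i * π)))
          -- build up the left tower
          have d2a := descent_braid_a hji hdi hdj
          have d2b := descent_braid_b hji hdj
          have h1 : IsReducedWord n (coxGen n j * (coxGen n i * π)) (i :: w) :=
            descent_extend d2b hw
          have h2 : IsReducedWord n (coxGen n i * π) (j :: i :: w) :=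
            descent_extend d2a h1
          -- build up the right tower
          have hbraid : coxGen n i * (coxGen n j * (coxGen n i * π)) =
              coxGen n j * (coxGen n i * (coxGen n j * π)) := by
            have := coxGen_braid (n := n) hji
            calc coxGen n i * (coxGen n j * (coxGen n i * π))
                = (coxGen n i * coxGen n j * coxGen n i) * π := by group
              _ = (coxGen n j * coxGen n i * coxGen n j) * π := by rw [this]
              _ = coxGen n j * (coxGen n i * (coxGen n j * π)) := by group
          have hw' : IsReducedWord n (coxGen n j * (coxGen n i * (coxGen n j * π))) w := by
            rwa [← hbraid]
          have d2a' := descent_braid_a' hji hdi hdj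
          have d2b' := descent_braid_b' hji hdi
          have h1' : IsReducedWord n (coxGen n i * (coxGen n j * π)) (j :: w) :=
            descent_extend d2b' hw'
          have h2' : IsReducedWord n (coxGen n j * π) (i :: j :: w) :=
            descent_extend d2a' h1'
          -- now the chains
          have hulen2 : u.length ≤ k - 1 := by
            simp only [List.length_cons] at hku; omega
          have c1 : RR u (j :: i :: w) := ih (k-1) (by
              simp only [List.length_cons] at hku; omega) _ u (j :: i :: w) hulen2 hu h2
          have hvlen2 : v.length ≤ k - 1 := by
            have e1 := (isReducedWord_iff.1 hv).2
            have e2 := (isReducedWord_iff.1 hu).2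
            have d1 := permLength_descent hdi
            have d2 := permLength_descent hdj
            simp only [List.length_cons] at hku
            omega
          have c2 : RR v (i :: j :: w) := ih (k-1) (by
              simp only [List.length_cons] at hku; omega) _ v (i :: j :: w) hvlen2 hv h2'
          have step1 : RR (i :: u) (i :: j :: i :: w) := RR.cons i c1
          have step2 : RR (i :: j :: i :: w) (j :: i :: j :: w) := RR.braid_front hji _
          have step3 : RR (j :: i :: j :: w) (j :: v) := RR.cons j c2.symm'
          exact (step1.trans' step2).trans' step3
        have hij3 : ((i:ℕ) + 2 ≤ (j:ℕ) ∨ (j:ℕ) + 2 ≤ (i:ℕ)) ∨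
            (j:ℕ) = (i:ℕ) + 1 ∨ (i:ℕ) = (j:ℕ) + 1 := by
          have : (i:ℕ) ≠ (j:ℕ) := fun hc => hijeq (Fin.ext hc)
          omega
        rcases hij3 with hcomm | hji | hij
        · -- commuting case
          obtain ⟨w₀, hw₀⟩ := exists_isReducedWord (coxGen n j * (coxGen n i * π))
          have d1 : (coxGen n i * π)⁻¹ (bI j) < (coxGen n i * π)⁻¹ (aI j) :=
            descent_comm hcomm hdj
          have h1 : IsReducedWord n (coxGen n i * π) (j :: w₀) := descent_extend d1 hw₀
          have hcommeq : coxGen n j * (coxGen n i * π) = coxGen n i * (coxGen n j * π) := by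
            have := coxGen_comm (n := n) hcomm
            calc coxGen n j * (coxGen n i * π) = (coxGen n j * coxGen n i) * π := by group
              _ = (coxGen n i * coxGen n j) * π := by rw [this]
              _ = coxGen n i * (coxGen n j * π) := by group
          have hw₀' : IsReducedWord n (coxGen n i * (coxGen n j * π)) w₀ := by
            rwa [hcommeq] at hw₀
          have d1' : (coxGen n j * π)⁻¹ (bI i) < (coxGen n j * π)⁻¹ (aI i) :=
            descent_comm (hcomm.symm) hdi
          have h1' : IsReducedWord n (coxGen n j * π) (i :: w₀) := descent_extend d1' hw₀'
          have hulen2 : u.length ≤ k - 1 := by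
            simp only [List.length_cons] at hk; omega
          have c1 : RR u (j :: w₀) := ih (k-1) (by omega) _ u (j :: w₀) hulen2 hu h1
          have hvlen2 : v.length ≤ k - 1 := by
            have e1 := (isReducedWord_iff.1 hv).2
            have e2 := (isReducedWord_iff.1 hu).2
            have d1 := permLength_descent hdi
            have d2 := permLength_descent hdj
            simp only [List.length_cons] at hk
            omega
          have c2 : RR v (i :: w₀) := ih (k-1) (by omega) _ v (i :: w₀) hvlen2 hv h1'
          have step1 : RR (i :: u) (i :: j :: w₀) := RR.cons i c1
          have step2 : RR (i :: j :: w₀) (j :: i :: w₀) := RR.comm_front hcomm w₀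
          have step3 : RR (j :: i :: w₀) (j :: v) := RR.cons j c2.symm'
          exact (step1.trans' step2).trans' step3
        · exact braidcase π i j u v hji hk hl hl'
        · have hkv : (j :: v).length ≤ k := by
            have e1 := (isReducedWord_iff.1 hv).2
            have e2 := (isReducedWord_iff.1 hu).2
            have d1 := permLength_descent hdi
            have d2 := permLength_descent hdj
            simp only [List.length_cons] at hk ⊢
            omega
          exact (braidcase π j i v u hij hkv hl' hl).symm'

end Matsumoto

section Plumbing

variable {n : ℕ}

lemma permGenWord_one : permGenWord n (1 : Equiv.Perm (Fin n)) = 1 := dif_pos rfl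

lemma permGenWord_ne {π : Equiv.Perm (Fin n)} (h : π ≠ 1) :
    permGenWord n π = FreeMonoid.of ⟨π, h⟩ := dif_neg h

/-- chosen reduced word -/
noncomputable def redWord (π : Equiv.Perm (Fin n)) : List (Fin (n-1)) :=
  (exists_isReducedWord π).choose

lemma redWord_spec (π : Equiv.Perm (Fin n)) : IsReducedWord n π (redWord π) :=
  (exists_isReducedWord π).choose_spec

lemma braidMk_eq_of_reduced {π : Equiv.Perm (Fin n)} {l l' : List (Fin (n-1))}
    (h : IsReducedWord n π l) (h' : IsReducedWord n π l') :
    braidMk n (FreeMonoid.ofList l) = braidMk n (FreeMonoid.ofList l') :=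
  (Con.eq _).2 (matsumoto_aux l.length π l l' le_rfl h h')

/-- the chosen lift of a permutation to the positive braid monoid -/
noncomputable def Lhat (π : Equiv.Perm (Fin n)) : BraidMonoidPos n :=
  braidMk n (FreeMonoid.ofList (redWord π))

lemma Lhat_one : Lhat (1 : Equiv.Perm (Fin n)) = 1 := by
  have h : IsReducedWord n (1 : Equiv.Perm (Fin n)) [] :=
    isReducedWord_iff.2 ⟨by simp [wp], by simp [permLength_one]⟩
  rw [Lhat, braidMk_eq_of_reduced (redWord_spec 1) h]
  exact map_one _

lemma Lhat_mul {α β : Equiv.Perm (Fin n)}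
    (hadd : permLength n (α * β) = permLength n α + permLength n β) :
    Lhat (α * β) = Lhat α * Lhat β := by
  have happ : IsReducedWord n (α * β) (redWord α ++ redWord β) :=
    reduced_append hadd (redWord_spec α) (redWord_spec β)
  rw [Lhat, braidMk_eq_of_reduced (redWord_spec (α * β)) happ]
  have : (FreeMonoid.ofList (redWord α ++ redWord β) : FreeMonoid (Fin (n-1))) =
      FreeMonoid.ofList (redWord α) * FreeMonoid.ofList (redWord β) := rfl
  rw [this, map_mul]
  rfl

/-- the morphism from the free monoid on nontrivial permutations to the braid monoid -/
noncomputable def phi0 : FreeMonoid {π : Equiv.Perm (Fin n) // π ≠ 1} →* BraidMonoidPos n :=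
  FreeMonoid.lift fun p => Lhat p.1

lemma phi0_permGenWord (π : Equiv.Perm (Fin n)) : phi0 (permGenWord n π) = Lhat π := by
  by_cases h : π = 1
  · subst h
    rw [permGenWord_one, map_one, Lhat_one]
  · rw [permGenWord_ne h]
    exact FreeMonoid.lift_eval_of _ _

lemma length_add_split {π τ ξ : Equiv.Perm (Fin n)}
    (hadd : permLength n (π * τ * ξ) = permLength n π + permLength n τ + permLength n ξ) :
    permLength n (τ * ξ) = permLength n τ + permLength n ξ ∧
    permLength n (π * τ) = permLength n π + permLength n τ ∧
    permLength n (π * (τ * ξ)) = permLength n π + permLength n (τ * ξ) ∧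
    permLength n ((π * τ) * ξ) = permLength n (π * τ) + permLength n ξ := by
  have h1 : permLength n (τ * ξ) ≤ permLength n τ + permLength n ξ := permLength_le_add
  have h2 : permLength n (π * τ) ≤ permLength n π + permLength n τ := permLength_le_add
  have h3 : permLength n (π * (τ * ξ)) ≤ permLength n π + permLength n (τ * ξ) :=
    permLength_le_add
  have h4 : permLength n ((π * τ) * ξ) ≤ permLength n (π * τ) + permLength n ξ :=
    permLength_le_add
  have e : π * τ * ξ = π * (τ * ξ) := mul_assoc _ _ _
  rw [e] at hadd
  have e2 : permLength n ((π * τ) * ξ) = permLength n (π * (τ * ξ)) := by rw [mul_assoc]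
  omega

lemma phi0_ker : ∀ x y, adjThurstonRel n x y → phi0 x = phi0 y := by
  rintro x y ⟨π, τ, ξ, hadd, rfl, rfl⟩
  obtain ⟨h1, h2, h3, h4⟩ := length_add_split hadd
  rw [map_mul, map_mul, phi0_permGenWord, phi0_permGenWord, phi0_permGenWord,
    phi0_permGenWord, Lhat_mul h1, Lhat_mul h2]
  rw [mul_assoc]

/-- the induced morphism on the Adjan–Thurston presented monoid -/
noncomputable def phi : (conGen (adjThurstonRel n)).Quotient →* BraidMonoidPos n :=
  Con.lift _ phi0 (Con.conGen_le.2 fun x y h => phi0_ker x y h)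

/-- multiplication of generator classes in the presented monoid -/
lemma T_mul {α β : Equiv.Perm (Fin n)}
    (hadd : permLength n (α * β) = permLength n α + permLength n β) :
    (conGen (adjThurstonRel n)).mk' (permGenWord n α) *
      (conGen (adjThurstonRel n)).mk' (permGenWord n β) =
    (conGen (adjThurstonRel n)).mk' (permGenWord n (α * β)) := by
  rw [← map_mul]
  apply (Con.eq _).2
  have hrel : adjThurstonRel n (permGenWord n α * permGenWord n β)
      (permGenWord n (α * β)) := by
    refine ⟨α, β, 1, by simpa [permLength_one] using hadd, by rw [mul_one], ?_⟩
    rw [permGenWord_one, mul_one]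
  exact ConGen.Rel.of _ _ hrel

/-- the morphism from words in braid generators to the presented monoid -/
noncomputable def psi0 : FreeMonoid (Fin (n-1)) →* (conGen (adjThurstonRel n)).Quotient :=
  FreeMonoid.lift fun i => (conGen (adjThurstonRel n)).mk' (permGenWord n (coxGen n i))

lemma psi0_of (i : Fin (n-1)) :
    psi0 (FreeMonoid.of i) = (conGen (adjThurstonRel n)).mk' (permGenWord n (coxGen n i)) :=
  FreeMonoid.lift_eval_of _ _

lemma inv_lt_coxGen {i j : Fin (n-1)} (hij : i ≠ j) :
    (coxGen n j)⁻¹ (aI i) < (coxGen n j)⁻¹ (bI i) := by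
  rw [coxGen_inv]
  have hvi := i.isLt
  have hvj := j.isLt
  have hne : (i:ℕ) ≠ (j:ℕ) := fun hc => hij (Fin.ext hc)
  rcases Nat.lt_trichotomy ((i:ℕ)+1) (j:ℕ) with h | h | h
  · -- j ≥ i+2 : both fixed
    rw [coxGen_fix (x := aI i) (by simp [aI]; omega) (by simp [aI]; omega),
      coxGen_fix (x := bI i) (by simp [bI]; omega) (by simp [bI]; omega)]
    exact Fin.lt_iff_val_lt_val.2 (by rw [bI_val]; omega)
  · -- j = i+1
    rw [coxGen_fix (x := aI i) (by simp [aI]; omega) (by simp [aI]; omega),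
      show bI i = aI j from bI_eq_aI h.symm, coxGen_aI]
    exact Fin.lt_iff_val_lt_val.2 (by simp [aI, bI]; omega)
  · -- i ≥ j+1, and i ≠ j so i ≥ j+1; split i = j+1 vs i ≥ j+2
    rcases Nat.lt_or_ge ((j:ℕ)+1) (i:ℕ) with h2 | h2
    · rw [coxGen_fix (x := aI i) (by simp [aI]; omega) (by simp [aI]; omega),
        coxGen_fix (x := bI i) (by simp [bI]; omega) (by simp [bI]; omega)]
      exact Fin.lt_iff_val_lt_val.2 (by rw [bI_val]; omega)
    · -- i = j+1
      have hi : (i:ℕ) = (j:ℕ)+1 := by omega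
      rw [show aI i = bI j from (bI_eq_aI hi).symm, coxGen_bI,
        coxGen_fix (x := bI i) (by simp [bI]; omega) (by simp [bI]; omega)]
      exact Fin.lt_iff_val_lt_val.2 (by simp [aI, bI]; omega)

lemma permLength_coxGen_mul {i j : Fin (n-1)} (hij : i ≠ j) :
    permLength n (coxGen n i * coxGen n j) = 2 := by
  rw [permLength_eq_invCount, invCount_coxGen_mul_pos (inv_lt_coxGen hij)]
  have := permLength_coxGen (n := n) j
  rw [permLength_eq_invCount] at this
  omega

lemma permLength_braid {i j : Fin (n-1)} (hji : (j:ℕ) = (i:ℕ) + 1) :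
    permLength n (coxGen n i * coxGen n j * coxGen n i) = 3 := by
  have hij : i ≠ j := fun hc => by rw [hc] at hji; omega
  have hlt : (coxGen n j * coxGen n i)⁻¹ (aI i) < (coxGen n j * coxGen n i)⁻¹ (bI i) := by
    have e1 : (coxGen n j * coxGen n i)⁻¹ (aI i) = bI i := by
      rw [inv_coxGen_mul, coxGen_inv,
        coxGen_fix (x := aI i) (i := j) (by simp [aI]; omega) (by simp [aI]; omega),
        coxGen_aI]
    have e2 : (coxGen n j * coxGen n i)⁻¹ (bI i) = bI j := by
      rw [inv_coxGen_mul, coxGen_inv, show bI i = aI j from bI_eq_aI hji, coxGen_aI,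
        coxGen_fix (x := bI j) (i := i) (by simp [bI]; omega) (by simp [bI]; omega)]
    rw [e1, e2]
    exact Fin.lt_iff_val_lt_val.2 (by simp [bI]; omega)
  have h2 : permLength n (coxGen n j * coxGen n i) = 2 := permLength_coxGen_mul hij.symm
  rw [mul_assoc, permLength_eq_invCount, invCount_coxGen_mul_pos hlt]
  rw [permLength_eq_invCount] at h2
  omega

lemma coxGen_mul_add {i j : Fin (n-1)} (hij : i ≠ j) :
    permLength n (coxGen n i * coxGen n j) =
      permLength n (coxGen n i) + permLength n (coxGen n j) := by
  rw [permLength_coxGen_mul hij, permLength_coxGen, permLength_coxGen]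

lemma psi0_ker : ∀ x y, braidRel (n-1) x y → psi0 (n := n) x = psi0 y := by
  rintro x y (⟨i, j, hij, rfl, rfl⟩ | ⟨i, j, hji, rfl, rfl⟩)
  · have hne : i ≠ j := fun hc => by subst hc; omega
    simp only [map_mul, psi0_of]
    rw [T_mul (coxGen_mul_add hne), T_mul (coxGen_mul_add hne.symm), coxGen_comm hij]
  · have hne : i ≠ j := fun hc => by rw [hc] at hji; omega
    have hbr := coxGen_braid (n := n) hji
    have hlij : permLength n (coxGen n i * coxGen n j * coxGen n i) = 3 :=
      permLength_braid hji
    have hlji : permLength n (coxGen n j * coxGen n i * coxGen n j) = 3 := by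
      rw [← hbr]; exact hlij
    have haddl : permLength n ((coxGen n i * coxGen n j) * coxGen n i) =
        permLength n (coxGen n i * coxGen n j) + permLength n (coxGen n i) := by
      rw [hlij, permLength_coxGen_mul hne, permLength_coxGen]
    have haddr : permLength n ((coxGen n j * coxGen n i) * coxGen n j) =
        permLength n (coxGen n j * coxGen n i) + permLength n (coxGen n j) := by
      rw [hlji, permLength_coxGen_mul hne.symm, permLength_coxGen]
    simp only [map_mul, psi0_of]
    rw [T_mul (coxGen_mul_add hne), T_mul (coxGen_mul_add hne.symm),
      T_mul haddl, T_mul haddr, hbr]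

/-- the induced morphism on the braid monoid -/
noncomputable def psi : BraidMonoidPos n →* (conGen (adjThurstonRel n)).Quotient :=
  Con.lift _ psi0 (Con.conGen_le.2 fun x y h => psi0_ker x y h)

lemma psi0_reduced : ∀ (l : List (Fin (n-1))) (π : Equiv.Perm (Fin n)),
    IsReducedWord n π l →
    psi0 (FreeMonoid.ofList l) = (conGen (adjThurstonRel n)).mk' (permGenWord n π) := by
  intro l
  induction l with
  | nil =>
    intro π h
    have : π = 1 := by
      rw [isReducedWord_iff] at h
      have := h.2
      simp only [List.length_nil] at this
      exact permLength_eq_zero_iff.1 this.symm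
    subst this
    rw [permGenWord_one, map_one]
    show psi0 (1 : FreeMonoid (Fin (n-1))) = 1
    exact map_one _
  | cons i u ih =>
    intro π h
    obtain ⟨hu, hdi⟩ := reduced_cons h
    have step : psi0 (FreeMonoid.ofList (i :: u)) =
        psi0 (FreeMonoid.of i) * psi0 (FreeMonoid.ofList u) := by
      rw [ofList_cons, map_mul]
    rw [step, psi0_of, ih _ hu]
    have hadd : permLength n (coxGen n i * (coxGen n i * π)) =
        permLength n (coxGen n i) + permLength n (coxGen n i * π) := by
      have hinv : coxGen n i * (coxGen n i * π) = π := by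
        rw [← mul_assoc, coxGen_mul_self, one_mul]
      rw [hinv, permLength_coxGen]
      have := permLength_descent hdi
      omega
    rw [T_mul hadd]
    congr 1
    rw [← mul_assoc, coxGen_mul_self, one_mul]

lemma psi_comp_phi_on_gen (p : {π : Equiv.Perm (Fin n) // π ≠ 1}) :
    psi (phi ((conGen (adjThurstonRel n)).mk' (FreeMonoid.of p))) =
      (conGen (adjThurstonRel n)).mk' (FreeMonoid.of p) := by
  have h1 : phi ((conGen (adjThurstonRel n)).mk' (FreeMonoid.of p)) =
      phi0 (FreeMonoid.of p) := Con.lift_mk' _ _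
  rw [h1]
  have h2 : phi0 (n := n) (FreeMonoid.of p) = Lhat p.1 := FreeMonoid.lift_eval_of _ _
  rw [h2, Lhat]
  have h3 : psi (braidMk n (FreeMonoid.ofList (redWord p.1))) =
      psi0 (FreeMonoid.ofList (redWord p.1)) := Con.lift_mk' _ _
  rw [h3, psi0_reduced _ _ (redWord_spec p.1), permGenWord_ne p.2]

lemma phi_comp_psi_on_gen (i : Fin (n-1)) :
    phi (psi (braidMk n (FreeMonoid.of i))) = braidMk n (FreeMonoid.of i) := by
  have h1 : psi (braidMk n (FreeMonoid.of i)) = psi0 (FreeMonoid.of i) := Con.lift_mk' _ _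
  rw [h1, psi0_of]
  have h2 : phi ((conGen (adjThurstonRel n)).mk' (permGenWord n (coxGen n i))) =
      phi0 (permGenWord n (coxGen n i)) := Con.lift_mk' _ _
  rw [h2, phi0_permGenWord, Lhat]
  have hred : IsReducedWord n (coxGen n i) [i] :=
    isReducedWord_iff.2 ⟨by simp [wp], by simp [permLength_coxGen]⟩
  exact braidMk_eq_of_reduced (redWord_spec (coxGen n i)) hred

end Plumbing

end ATaux

/-- The positive braid monoid `B_n⁺` is isomorphic to the monoid presented by
the generators `{E_π : π ∈ S_n, π ≠ 1}` subject to the relations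
`E_π E_{τξ} = E_{πτ} E_ξ` whenever `ℓ(πτξ) = ℓ(π) + ℓ(τ) + ℓ(ξ)`. -/
theorem braid_monoid_adjan_thurston_presentation (n : ℕ) :
    Nonempty ((conGen (adjThurstonRel n)).Quotient ≃* BraidMonoidPos n) := by
  refine ⟨MonoidHom.toMulEquiv (ATaux.phi (n := n)) (ATaux.psi (n := n)) ?_ ?_⟩
  · -- psi ∘ phi = id
    apply Con.lift_funext
    intro a
    have key : (ATaux.psi (n := n)).comp
          ((ATaux.phi (n := n)).comp (Con.mk' (conGen (adjThurstonRel n)))) =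
        Con.mk' (conGen (adjThurstonRel n)) :=
      FreeMonoid.hom_eq fun p => ATaux.psi_comp_phi_on_gen p
    have := DFunLike.congr_fun key a
    simpa using this
  · -- phi ∘ psi = id
    apply Con.lift_funext
    intro a
    have key : (ATaux.phi (n := n)).comp
          ((ATaux.psi (n := n)).comp (braidMk n)) = braidMk n :=
      FreeMonoid.hom_eq fun i => ATaux.phi_comp_psi_on_gen i
    have := DFunLike.congr_fun key a
    simpa [braidMk] using this
end

section
/- Let Υ be a left-associative, left-cancellative germ. An element E_a·E_b of Υ^[2] is irreducible (no reduction E_aE_b → E_{a•c}E_d with E_a ⪆ E_{a•c} applies) if and only if the set J_Υ(E_a,E_b) = {E_c ∈ Υ : E_a•E_c is defined and E_c ≼_Υ E_b} consists entirely of invertible elements of Υ. -/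
/-- A germ `(Υ, •, 1)`: a precategory together with a partial product
(modelled with `Option`) such that identities are neutral and
`(α•β)•γ` is defined iff `α•(β•γ)` is, in which case they agree. -/
structure Germ (Obj : Type*) where
  /-- Morphisms (elements) with given source and target. -/
  Hom : Obj → Obj → Type*
  /-- Identity elements. -/
  one : ∀ x, Hom x x
  /-- The partial product: `none` means undefined. -/
  mul : ∀ {x y z}, Hom x y → Hom y z → Option (Hom x z)
  one_mul : ∀ {x y} (f : Hom x y), mul (one x) f = some f
  mul_one : ∀ {x y} (f : Hom x y), mul f (one y) = some f
  assoc : ∀ {x y z w} (α : Hom x y) (β : Hom y z) (γ : Hom z w)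
    (d : Hom x z) (e : Hom y w), mul α β = some d → mul β γ = some e →
    mul d γ = mul α e

namespace Germ

variable {Obj : Type*} (G : Germ Obj)

/-- Left-associativity: `(α•β)•γ` defined implies `β•γ` defined. -/
def LeftAssociative : Prop :=
  ∀ {x y z w : Obj} (α : G.Hom x y) (β : G.Hom y z) (γ : G.Hom z w)
    (d : G.Hom x z), G.mul α β = some d → (G.mul d γ).isSome → (G.mul β γ).isSome

/-- Left-cancellativity: `α•β = α•γ` implies `β = γ`. -/
def LeftCancellative : Prop :=
  ∀ {x y z : Obj} (α : G.Hom x y) (β γ : G.Hom y z) (d : G.Hom x z),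
    G.mul α β = some d → G.mul α γ = some d → β = γ

/-- Left-divisibility `f ≼_Υ g`: `g = f • h` for some `h`. -/
def Div {x y z : Obj} (f : G.Hom x y) (g : G.Hom x z) : Prop :=
  ∃ h : G.Hom y z, G.mul f h = some g

/-- The strict relation `f ⪆ g`: `f ≼_Υ g` but not `g ≼_Υ f`. -/
def Gt {x y z : Obj} (f : G.Hom x y) (g : G.Hom x z) : Prop :=
  G.Div f g ∧ ¬ G.Div g f

/-- Invertible elements of the germ. -/
def Invertible {x y : Obj} (f : G.Hom x y) : Prop :=
  ∃ g : G.Hom y x, G.mul f g = some (G.one x) ∧ G.mul g f = some (G.one y)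

end Germ

namespace Germ

variable {Obj : Type*} (G : Germ Obj)

/-- A composable pair `α · β` is reducible if `β = β₁ • β₂` with `α • β₁`
defined and `α ⪆ α • β₁` (strictly). -/
def Reducible {x y z : Obj} (α : G.Hom x y) (β : G.Hom y z) : Prop :=
  ∃ (w : Obj) (β₁ : G.Hom y w) (β₂ : G.Hom w z) (c : G.Hom x w),
    G.mul β₁ β₂ = some β ∧ G.mul α β₁ = some c ∧ G.Gt α c

end Germ

/-- For a left-associative, left-cancellative germ `Υ`, an element `E_a · E_b`
of `Υ^[2]` is irreducible if and only if the set
`J_Υ(E_a, E_b) = {E_c : E_a • E_c defined and E_c ≼_Υ E_b}` consists entirely of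
invertible elements of `Υ`. -/
theorem germ_irreducible_iff_J_invertible {Obj : Type*} (G : Germ Obj)
    (hla : G.LeftAssociative) (hlc : G.LeftCancellative)
    {x y z : Obj} (α : G.Hom x y) (β : G.Hom y z) :
    ¬ G.Reducible α β ↔
      ∀ (w : Obj) (γ : G.Hom y w), (G.mul α γ).isSome → G.Div γ β →
        G.Invertible γ := by
  constructor
  · intro hirr w γ hdef hdiv
    obtain ⟨c, hc⟩ := Option.isSome_iff_exists.mp hdef
    obtain ⟨δ, hδ⟩ := hdiv
    -- not strictly greater, but Div α c holds, so Div c α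
    have hngt : ¬ G.Gt α c := fun hgt => hirr ⟨w, γ, δ, c, hδ, hc, hgt⟩
    have hdiv_ac : G.Div α c := ⟨γ, hc⟩
    have hdiv_ca : G.Div c α := by
      by_contra h
      exact hngt ⟨hdiv_ac, h⟩
    obtain ⟨ε, hε⟩ := hdiv_ca
    -- γ • ε is defined
    have hsome : (G.mul γ ε).isSome := hla α γ ε c hc (by simp [hε])
    obtain ⟨u, hu⟩ := Option.isSome_iff_exists.mp hsome
    have h1 : G.mul c ε = G.mul α u := G.assoc α γ ε c u hc hu
    have h2 : G.mul α u = some α := h1 ▸ hε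
    have hu1 : u = G.one y := hlc α u (G.one y) α h2 (G.mul_one α)
    subst hu1
    -- now show ε • γ = one w
    have hsome2 : (G.mul ε γ).isSome :=
      hla γ ε γ (G.one y) hu (by simp [G.one_mul])
    obtain ⟨v, hv⟩ := Option.isSome_iff_exists.mp hsome2
    have h3 : G.mul (G.one y) γ = G.mul γ v := G.assoc γ ε γ (G.one y) v hu hv
    have h4 : G.mul γ v = some γ := by rw [← h3, G.one_mul]
    have hv1 : v = G.one w := hlc γ v (G.one w) γ h4 (G.mul_one γ)
    subst hv1
    exact ⟨ε, hu, hv⟩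
  · rintro hJ ⟨w, β₁, β₂, c, hβ, hc, hgt⟩
    have hinv : G.Invertible β₁ := hJ w β₁ (by simp [hc]) ⟨β₂, hβ⟩
    obtain ⟨ε, hε1, hε2⟩ := hinv
    have h1 : G.mul c ε = G.mul α (G.one y) := G.assoc α β₁ ε c (G.one y) hc hε1
    have h2 : G.mul c ε = some α := by rw [h1, G.mul_one]
    exact hgt.2 ⟨ε, h2⟩
end
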